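/- arXiv:1805.09720 — 9 statements merged into one kernel-verified Lean document; each statement's English description precedes it below -/
import Mathlib

section
/- Let H be a real Hilbert space, let A : H → Set H be a set-valued operator and let β ∈ (0,1). Then for every x ∈ H, J_{A^{(β)}}(x) = β • J_A(x) = {β • y | y ∈ J_A(x)}, i.e. the resolvent of the β-strengthening of A equals β times the resolvent of A. -/
open Pointwise

/-- The resolventOp of a set-valued operator `A`: `J_A(x) = {y | x − y ∈ A y}`. -/
def resolventOp {H : Type*} [NormedAddCommGroup H] [InnerProductSpace ℝ H]
    (A : H → Set H) (x : H) : Set H :=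
  {y | x - y ∈ A y}

/-- The `β`-strengthening of `A`: `A^{(β)}(x) = {u + ((1−β)/β) • x | u ∈ A(β⁻¹ • x)}`. -/
def strengthening {H : Type*} [NormedAddCommGroup H] [InnerProductSpace ℝ H]
    (A : H → Set H) (β : ℝ) (x : H) : Set H :=
  {v | ∃ u ∈ A (β⁻¹ • x), v = u + ((1 - β) / β) • x}

theorem mem_resolventOp_strengthening_iff {H : Type*} [NormedAddCommGroup H]
    [InnerProductSpace ℝ H] (A : H → Set H) {β : ℝ} (hβ : β ≠ 0) {x y : H} :
    y ∈ resolventOp (strengthening A β) x ↔ β⁻¹ • y ∈ resolventOp A x := by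
  have hcoef : (1 - β) / β = β⁻¹ - 1 := by field_simp
  simp only [resolventOp, strengthening, Set.mem_ofPred_eq, hcoef, sub_smul, one_smul]
  constructor
  · rintro ⟨u, hu, hxy⟩
    convert hu using 1
    rw [← sub_eq_iff_eq_add.mpr hxy]
    abel
  · exact fun h ↦ ⟨_, h, by abel⟩

theorem stmt4_general {H : Type*} [NormedAddCommGroup H] [InnerProductSpace ℝ H]
    (A : H → Set H) (β : ℝ) (hβ : β ∈ Set.Ioo (0 : ℝ) 1) :
    ∀ x : H, resolventOp (strengthening A β) x = β • resolventOp A x := by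
  intro x
  ext y
  rw [Set.mem_smul_set_iff_inv_smul_mem₀ hβ.1.ne', mem_resolventOp_strengthening_iff A hβ.1.ne']

theorem stmt4 {H : Type*} [NormedAddCommGroup H] [InnerProductSpace ℝ H] [CompleteSpace H]
    (A : H → Set H) (β : ℝ) (hβ : β ∈ Set.Ioo (0 : ℝ) 1) :
    ∀ x : H, resolventOp (strengthening A β) x = β • resolventOp A x :=
  stmt4_general A β hβ
end

section
/- Let H be a real Hilbert space, let A : H → Set H be a set-valued operator and let β ∈ (0,1). Then A is monotone if and only if the β-strengthening A^{(β)} is ((1−β)/β)-strongly monotone. -/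
open Pointwise RealInnerProductSpace

/-- A set-valued operator `A : H → Set H` is monotone if
`⟪x − y, u − v⟫ ≥ 0` for all `(x,u), (y,v)` in its graph. -/
def MonotoneOp {H : Type*} [NormedAddCommGroup H] [InnerProductSpace ℝ H]
    (A : H → Set H) : Prop :=
  ∀ x y u v : H, u ∈ A x → v ∈ A y → 0 ≤ ⟪x - y, u - v⟫

/-- A set-valued operator `A : H → Set H` is `μ`-strongly monotone if
`⟪x − y, u − v⟫ ≥ μ‖x − y‖²` for all `(x,u), (y,v)` in its graph. -/
def StronglyMonotoneOp {H : Type*} [NormedAddCommGroup H] [InnerProductSpace ℝ H]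
    (μ : ℝ) (A : H → Set H) : Prop :=
  ∀ x y u v : H, u ∈ A x → v ∈ A y → μ * ‖x - y‖ ^ 2 ≤ ⟪x - y, u - v⟫

theorem stmt5 {H : Type*} [NormedAddCommGroup H] [InnerProductSpace ℝ H] [CompleteSpace H]
    (A : H → Set H) (β : ℝ) (hβ : β ∈ Set.Ioo (0 : ℝ) 1) :
    MonotoneOp A ↔ StronglyMonotoneOp ((1 - β) / β) (strengthening A β) := by
  obtain ⟨hβ0, hβ1⟩ := hβ
  have hβne : β ≠ 0 := ne_of_gt hβ0
  constructor
  · intro hA x y v₁ v₂ h₁ h₂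
    obtain ⟨u₁, hu₁, rfl⟩ := h₁
    obtain ⟨u₂, hu₂, rfl⟩ := h₂
    have hmono := hA (β⁻¹ • x) (β⁻¹ • y) u₁ u₂ hu₁ hu₂
    have key : ⟪x - y, u₁ - u₂⟫ = β * ⟪β⁻¹ • x - β⁻¹ • y, u₁ - u₂⟫ := by
      rw [← smul_sub, real_inner_smul_left]
      field_simp
    have h1 : 0 ≤ ⟪x - y, u₁ - u₂⟫ := by
      rw [key]; positivity
    have h2 : ⟪x - y, (u₁ + ((1 - β) / β) • x) - (u₂ + ((1 - β) / β) • y)⟫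
        = ⟪x - y, u₁ - u₂⟫ + ((1 - β) / β) * ‖x - y‖ ^ 2 := by
      have : (u₁ + ((1 - β) / β) • x) - (u₂ + ((1 - β) / β) • y)
          = (u₁ - u₂) + ((1 - β) / β) • (x - y) := by
        rw [smul_sub]; abel
      rw [this, inner_add_right, real_inner_smul_right, real_inner_self_eq_norm_sq]
      try ring
    rw [h2]
    linarith
  · intro hS x y u v hu hv
    have hx : u + ((1 - β) / β) • (β • x) ∈ strengthening A β (β • x) := by
      refine ⟨u, ?_, rfl⟩
      rw [inv_smul_smul₀ hβne]; exact hu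
    have hy : v + ((1 - β) / β) • (β • y) ∈ strengthening A β (β • y) := by
      refine ⟨v, ?_, rfl⟩
      rw [inv_smul_smul₀ hβne]; exact hv
    have h := hS (β • x) (β • y) _ _ hx hy
    have hsub : β • x - β • y = β • (x - y) := (smul_sub β x y).symm
    have h2 : ⟪β • x - β • y, (u + ((1 - β) / β) • (β • x)) - (v + ((1 - β) / β) • (β • y))⟫
        = β * ⟪x - y, u - v⟫ + ((1 - β) / β) * ‖β • x - β • y‖ ^ 2 := by
      have e : (u + ((1 - β) / β) • (β • x)) - (v + ((1 - β) / β) • (β • y))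
          = (u - v) + ((1 - β) / β) • (β • x - β • y) := by
        rw [smul_sub]; abel
      rw [e, inner_add_right, real_inner_smul_right, real_inner_self_eq_norm_sq,
        hsub, real_inner_smul_left]
    rw [h2] at h
    have hb : 0 ≤ β * ⟪x - y, u - v⟫ := by linarith
    nlinarith
end

section
/- Let H be a real Hilbert space, let A, B : H → Set H be set-valued operators and let β ∈ (0,1). Then the set of zeros of the sum of the β-strengthenings satisfies zer(A^{(β)} + B^{(β)}) = β • J_{(1/(2(1−β)))(A+B)}(0) = {β • y | 0 − y ∈ (1/(2(1−β))) • (A y + B y)}, where A y + B y denotes the Minkowski sum. -/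
open Pointwise

theorem stmt7 {H : Type*} [NormedAddCommGroup H] [InnerProductSpace ℝ H] [CompleteSpace H]
    (A B : H → Set H) (β : ℝ) (hβ : β ∈ Set.Ioo (0 : ℝ) 1) :
    {x : H | (0 : H) ∈ strengthening A β x + strengthening B β x}
      = β • {y : H | (0 : H) - y ∈ (1 / (2 * (1 - β))) • (A y + B y)} := by
  obtain ⟨hβ0, hβ1⟩ := hβ
  have hβne : β ≠ 0 := ne_of_gt hβ0
  have h1β : (1 : ℝ) - β ≠ 0 := by linarith
  ext x
  simp only [Set.mem_setOf_eq, Set.mem_smul_set, Set.mem_add, strengthening]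
  constructor
  · rintro ⟨a, ⟨u, hu, rfl⟩, b, ⟨v, hv, rfl⟩, hab⟩
    refine ⟨β⁻¹ • x, ⟨u + v, ⟨u, hu, v, hv, rfl⟩, ?_⟩, by simp [smul_smul, hβne]⟩
    have huv : u + v = (-(2 * (1 - β) / β)) • x := by
      have := hab
      rw [show u + ((1 - β) / β) • x + (v + ((1 - β) / β) • x)
          = u + v + (2 * ((1 - β) / β)) • x by module] at this
      have : u + v = -((2 * ((1 - β) / β)) • x) := by
        rw [eq_neg_iff_add_eq_zero]; exact this
      rw [this]; module
    rw [huv, smul_smul]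
    rw [show (1 / (2 * (1 - β))) * (-(2 * (1 - β) / β)) = -β⁻¹ by
      field_simp]
    rw [zero_sub, neg_smul]
  · rintro ⟨y, hy, rfl⟩
    obtain ⟨w, ⟨u, hu, v, hv, rfl⟩, hw⟩ := hy
    have hinv : β⁻¹ • β • y = y := by rw [smul_smul, inv_mul_cancel₀ hβne, one_smul]
    refine ⟨u + ((1 - β) / β) • (β • y), ⟨u, by rwa [hinv], rfl⟩,
      v + ((1 - β) / β) • (β • y), ⟨v, by rwa [hinv], rfl⟩, ?_⟩
    have huv : u + v = (-(2 * (1 - β))) • y := by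
      have : (2 * (1 - β)) • ((1 / (2 * (1 - β))) • (u + v)) = (2 * (1 - β)) • (0 - y) := by
        rw [hw]
      rw [smul_smul, mul_one_div, div_self (by positivity : (2:ℝ) * (1 - β) ≠ 0), one_smul] at this
      rw [this]; module
    rw [show u + ((1 - β) / β) • β • y + (v + ((1 - β) / β) • β • y)
        = u + v + (2 * (1 - β)) • y by
      rw [smul_smul, div_mul_cancel₀ _ hβne]; module]
    rw [huv]; module
end

section
/- Let H be a real Hilbert space, let A, B : H → Set H be set-valued operators and let β ∈ (0,1). Then zer(A^{(β)} + B^{(β)}) ≠ ∅ if and only if 0 ∈ ran(Id + (1/(2(1−β)))(A + B)), where ran(Id + C) = {x + u | x ∈ H, u ∈ C x}. -/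
open Pointwise

/-- The range of `Id + A`: `ran(Id + A) = {x + u | x ∈ H, u ∈ A x}`. -/
def ranIdAdd {H : Type*} [NormedAddCommGroup H] [InnerProductSpace ℝ H]
    (A : H → Set H) : Set H :=
  {y | ∃ x : H, ∃ u ∈ A x, y = x + u}

theorem stmt8 {H : Type*} [NormedAddCommGroup H] [InnerProductSpace ℝ H] [CompleteSpace H]
    (A B : H → Set H) (β : ℝ) (hβ : β ∈ Set.Ioo (0 : ℝ) 1) :
    {x : H | (0 : H) ∈ strengthening A β x + strengthening B β x}.Nonempty
      ↔ (0 : H) ∈ ranIdAdd (fun x => (1 / (2 * (1 - β))) • (A x + B x)) := by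
  obtain ⟨hβ0, hβ1⟩ := hβ
  have hβ0' : β ≠ 0 := ne_of_gt hβ0
  have h1β : (1 : ℝ) - β ≠ 0 := by linarith
  constructor
  · rintro ⟨x, hx⟩
    rw [Set.mem_setOf_eq, Set.mem_add] at hx
    obtain ⟨p, ⟨u, hu, hp⟩, q, ⟨v, hv, hq⟩, hpq⟩ := hx
    refine ⟨β⁻¹ • x, (1 / (2 * (1 - β))) • (u + v),
      Set.smul_mem_smul_set (Set.add_mem_add hu hv), ?_⟩
    have key : u + v = (-(2 * (1 - β) / β)) • x := by
      have : u + ((1 - β) / β) • x + (v + ((1 - β) / β) • x) = 0 := by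
        rw [← hp, ← hq]; exact hpq
      have := this
      rw [← sub_eq_zero]
      rw [← this]
      module
    rw [key, smul_smul]
    rw [show (1 / (2 * (1 - β))) * (-(2 * (1 - β) / β)) = -β⁻¹ by
      field_simp]
    module
  · rintro ⟨y, w, hw, hyw⟩
    obtain ⟨s, hs, rfl⟩ := hw
    rw [Set.mem_add] at hs
    obtain ⟨u, hu, v, hv, huv⟩ := hs
    refine ⟨β • y, ?_⟩
    rw [Set.mem_setOf_eq, Set.mem_add]
    have hy : (β⁻¹ • (β • y)) = y := by rw [smul_smul, inv_mul_cancel₀ hβ0', one_smul]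
    refine ⟨u + ((1 - β) / β) • (β • y), ⟨u, by rw [hy]; exact hu, rfl⟩,
      v + ((1 - β) / β) • (β • y), ⟨v, by rw [hy]; exact hv, rfl⟩, ?_⟩
    have key : u + v = (-(2 * (1 - β))) • y := by
      rw [← huv] at hyw
      have : y + (1 / (2 * (1 - β))) • (u + v) = 0 := by rw [← hyw]
      have h2 : (2 * (1 - β)) • (y + (1 / (2 * (1 - β))) • (u + v)) = 0 := by
        rw [this, smul_zero]
      rw [smul_add, smul_smul, show (2 * (1 - β)) * (1 / (2 * (1 - β))) = 1 by
        field_simp, one_smul] at h2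
      rw [← sub_eq_zero, ← h2]; module
    rw [show u + ((1 - β) / β) • (β • y) + (v + ((1 - β) / β) • (β • y))
        = (u + v) + (2 * ((1 - β) / β * β)) • y by module, key,
      show (1 - β) / β * β = 1 - β by field_simp]
    module
end

section
/- Let H be a real Hilbert space, let A, B : H → Set H be maximally monotone operators, let γ > 0, β ∈ (0,1), let (λ_n) be a sequence in [0,1] with ∑ λ_n(1−λ_n) = ∞, and suppose q ∈ ran(Id + (γ/(2(1−β)))(A + B)). Given x_0 ∈ H, define x_{n+1} = (1−λ_n) x_n + λ_n (2β J_{γB_{−q}} − Id)((2β J_{γA_{−q}} − Id)(x_n)), where J_{γA_{−q}}(x) is the unique y ∈ H with x − y ∈ γ • A(y + q) and similarly for B. Then the sequence (x_{n+1} − x_n) converges strongly (in norm) to 0. -/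
open Pointwise RealInnerProductSpace Filter

/-- A set-valued operator is maximally monotone if it is monotone and `(x,u)` belongs
to its graph whenever `⟪x − y, u − v⟫ ≥ 0` for all `(y,v)` in its graph. -/
def MaxMonotoneOp {H : Type*} [NormedAddCommGroup H] [InnerProductSpace ℝ H]
    (A : H → Set H) : Prop :=
  MonotoneOp A ∧ ∀ x u : H, (∀ y v : H, v ∈ A y → 0 ≤ ⟪x - y, u - v⟫) → u ∈ A x

theorem km_identity {H : Type*} [NormedAddCommGroup H] [InnerProductSpace ℝ H]
    (lam : ℝ) (u v p : H) :
    ‖(1 - lam) • u + lam • v - p‖^2 =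
      (1 - lam)*‖u - p‖^2 + lam*‖v - p‖^2 - lam*(1 - lam)*‖u - v‖^2 := by
  have h1 : (1 - lam) • u + lam • v - p = (u - p) + lam • (v - u) := by module
  have h2 : v - p = (u - p) + (v - u) := by abel
  have h3 : u - v = -(v - u) := by abel
  rw [h1, h2, h3, norm_add_sq_real, norm_add_sq_real, real_inner_smul_right, norm_smul,
    norm_neg, Real.norm_eq_abs]
  ring_nf
  rw [sq_abs]

theorem refl_nonexp {H : Type*} [NormedAddCommGroup H] [InnerProductSpace ℝ H]
    (a d : H) (h : 0 ≤ ⟪a, d - a⟫) : ‖(2:ℝ) • a - d‖ ≤ ‖d‖ := by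
  have h1 : (2:ℝ) • a - d = a - (d - a) := by module
  have h2 : d = a + (d - a) := by abel
  have e1 : ‖a - (d-a)‖^2 = ‖a‖^2 - 2*⟪a, d-a⟫ + ‖d-a‖^2 := norm_sub_sq_real a (d-a)
  have e2 : ‖a + (d-a)‖^2 = ‖a‖^2 + 2*⟪a, d-a⟫ + ‖d-a‖^2 := norm_add_sq_real a (d-a)
  have hsq : ‖(2:ℝ) • a - d‖^2 ≤ ‖d‖^2 := by
    rw [h1]; nth_rewrite 2 [h2]; rw [e1, e2]; linarith
  nlinarith [norm_nonneg ((2:ℝ) • a - d), norm_nonneg d]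

theorem resolvent_unique {H : Type*} [NormedAddCommGroup H] [InnerProductSpace ℝ H]
    (A : H → Set H) (hA : MonotoneOp A) (γ : ℝ) (hγ : 0 < γ) (q s y₁ y₂ : H)
    (h1 : s - y₁ ∈ γ • A (y₁ + q)) (h2 : s - y₂ ∈ γ • A (y₂ + q)) : y₁ = y₂ := by
  obtain ⟨u, hu, hu'⟩ := h1
  obtain ⟨v, hv, hv'⟩ := h2
  have hu'' : γ • u = s - y₁ := hu'
  have hv'' : γ • v = s - y₂ := hv'
  have hm := hA (y₁ + q) (y₂ + q) u v hu hv
  have hin : (y₁ + q) - (y₂ + q) = y₁ - y₂ := by abel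
  rw [hin] at hm
  have hγuv : γ • (u - v) = y₂ - y₁ := by rw [smul_sub, hu'', hv'']; abel
  have huv : u - v = γ⁻¹ • (y₂ - y₁) := by
    rw [← hγuv, smul_smul, inv_mul_cancel₀ hγ.ne', one_smul]
  rw [huv, real_inner_smul_right] at hm
  have hneg : ⟪y₁ - y₂, y₂ - y₁⟫ = -‖y₁ - y₂‖^2 := by
    rw [show y₂ - y₁ = -(y₁ - y₂) by abel, inner_neg_right, real_inner_self_eq_norm_sq]
  rw [hneg] at hm
  have hinv : 0 < γ⁻¹ := inv_pos.mpr hγ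
  have : ‖y₁ - y₂‖^2 ≤ 0 := by nlinarith
  have : ‖y₁ - y₂‖ = 0 := by nlinarith [norm_nonneg (y₁ - y₂)]
  rwa [norm_sub_eq_zero_iff] at this

theorem km_conv {H : Type*} [NormedAddCommGroup H] [InnerProductSpace ℝ H]
    (T : H → H) (hTnonexp : ∀ s t : H, ‖T s - T t‖ ≤ ‖s - t‖) (p : H) (hfix : T p = p)
    (lam : ℕ → ℝ) (hlam : ∀ n, lam n ∈ Set.Icc (0 : ℝ) 1)
    (hlamsum : ¬ Summable (fun n => lam n * (1 - lam n)))
    (x : ℕ → H) (hxT : ∀ n, x (n + 1) = (1 - lam n) • x n + lam n • T (x n)) :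
    Tendsto (fun n => x (n + 1) - x n) atTop (nhds (0 : H)) := by
  set d : ℕ → ℝ := fun n => ‖T (x n) - x n‖ with hd_def
  have hd0le : ∀ n, 0 ≤ d n := fun n => norm_nonneg _
  have hx1 : ∀ n, x (n + 1) - x n = lam n • (T (x n) - x n) := by
    intro n; rw [hxT n]; module
  have hfej : ∀ n, ‖x (n + 1) - p‖^2 ≤ ‖x n - p‖^2 - lam n * (1 - lam n) * (d n)^2 := by
    intro n
    rw [hxT n, km_identity]
    have h5 : ‖T (x n) - p‖ ≤ ‖x n - p‖ := by
      calc ‖T (x n) - p‖ = ‖T (x n) - T p‖ := by rw [hfix]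
        _ ≤ ‖x n - p‖ := hTnonexp _ _
    have h6 : ‖T (x n) - p‖^2 ≤ ‖x n - p‖^2 := by
      nlinarith [norm_nonneg (T (x n) - p)]
    have h7 : ‖x n - T (x n)‖ = d n := norm_sub_rev _ _
    have hl := hlam n
    rw [h7]
    nlinarith [hl.1, hl.2]
  have hdd : ∀ n, d (n + 1) ≤ d n := by
    intro n
    have h1 : T (x n) - x (n + 1) = (1 - lam n) • (T (x n) - x n) := by
      rw [hxT n]; module
    calc d (n + 1) = ‖(T (x (n+1)) - T (x n)) + (T (x n) - x (n+1))‖ := by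
          show ‖T (x (n+1)) - x (n+1)‖ = _
          congr 1; abel
      _ ≤ ‖T (x (n+1)) - T (x n)‖ + ‖T (x n) - x (n+1)‖ := norm_add_le _ _
      _ ≤ ‖x (n+1) - x n‖ + (1 - lam n) * d n := by
          have := hTnonexp (x (n+1)) (x n)
          rw [h1, norm_smul, Real.norm_eq_abs, abs_of_nonneg (by linarith [(hlam n).2])]
          exact add_le_add this le_rfl
      _ = lam n * d n + (1 - lam n) * d n := by
          rw [hx1 n, norm_smul, Real.norm_eq_abs, abs_of_nonneg (hlam n).1]
      _ = d n := by ring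
  have hdmono : Antitone d := antitone_nat_of_succ_le hdd
  have hsum : ∀ n, ∑ k ∈ Finset.range n, lam k * (1 - lam k) * (d k)^2 ≤ ‖x 0 - p‖^2 := by
    have key : ∀ n, ∑ k ∈ Finset.range n, lam k * (1 - lam k) * (d k)^2 ≤
        ‖x 0 - p‖^2 - ‖x n - p‖^2 := by
      intro n
      induction n with
      | zero => simp
      | succ n ih =>
        rw [Finset.sum_range_succ]
        have := hfej n
        linarith
    intro n
    have := key n
    nlinarith [sq_nonneg ‖x n - p‖]
  have hbdd : BddBelow (Set.range d) := ⟨0, by rintro y ⟨n, rfl⟩; exact hd0le n⟩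
  have hdL : Tendsto d atTop (nhds (⨅ n, d n)) := tendsto_atTop_ciInf hdmono hbdd
  have hLnonneg : 0 ≤ ⨅ n, d n := le_ciInf hd0le
  have hL0 : (⨅ n, d n) = 0 := by
    by_contra hne
    have hLpos : 0 < ⨅ n, d n := lt_of_le_of_ne hLnonneg (Ne.symm hne)
    have hLle : ∀ n, (⨅ n, d n) ≤ d n := fun n => ciInf_le hbdd n
    refine hlamsum (summable_of_sum_range_le (c := ‖x 0 - p‖^2 / (⨅ n, d n)^2) ?_ ?_)
    · intro n
      have hl := hlam n
      nlinarith [hl.1, hl.2]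
    · intro n
      rw [le_div_iff₀ (by positivity)]
      have hterm : ∀ k ∈ Finset.range n,
          lam k * (1 - lam k) * (⨅ n, d n)^2 ≤ lam k * (1 - lam k) * (d k)^2 := by
        intro k _
        have hl := hlam k
        have hsq : (⨅ n, d n)^2 ≤ (d k)^2 := by
          nlinarith [hLle k, hLnonneg]
        have hnn : 0 ≤ lam k * (1 - lam k) := by nlinarith [hl.1, hl.2]
        exact mul_le_mul_of_nonneg_left hsq hnn
      calc (∑ k ∈ Finset.range n, lam k * (1 - lam k)) * (⨅ n, d n)^2
          = ∑ k ∈ Finset.range n, lam k * (1 - lam k) * (⨅ n, d n)^2 := by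
            rw [Finset.sum_mul]
        _ ≤ ∑ k ∈ Finset.range n, lam k * (1 - lam k) * (d k)^2 :=
            Finset.sum_le_sum hterm
        _ ≤ ‖x 0 - p‖^2 := hsum n
  have hdto0 : Tendsto d atTop (nhds 0) := hL0 ▸ hdL
  have hnorm : Tendsto (fun n => ‖x (n + 1) - x n‖) atTop (nhds 0) := by
    apply squeeze_zero (fun n => norm_nonneg _) (fun n => ?_) hdto0
    rw [hx1 n, norm_smul, Real.norm_eq_abs, abs_of_nonneg (hlam n).1]
    calc lam n * d n ≤ 1 * d n :=
        mul_le_mul_of_nonneg_right (hlam n).2 (hd0le n)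
      _ = d n := one_mul _
  exact tendsto_zero_iff_norm_tendsto_zero.mpr hnorm

theorem stmt10 {H : Type*} [NormedAddCommGroup H] [InnerProductSpace ℝ H] [CompleteSpace H]
    (A B : H → Set H) (hA : MaxMonotoneOp A) (hB : MaxMonotoneOp B)
    (γ β : ℝ) (hγ : 0 < γ) (hβ : β ∈ Set.Ioo (0 : ℝ) 1)
    (lam : ℕ → ℝ) (hlam : ∀ n, lam n ∈ Set.Icc (0 : ℝ) 1)
    (hlamsum : ¬ Summable (fun n => lam n * (1 - lam n)))
    (q : H) (hq : q ∈ ranIdAdd (fun x => (γ / (2 * (1 - β))) • (A x + B x)))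
    -- `JA = J_{γA₋q}` and `JB = J_{γB₋q}`: the (single-valued) resolvents of the
    -- inner (−q)-perturbations of `γA` and `γB`.
    (JA JB : H → H)
    (hJA : ∀ s : H, s - JA s ∈ γ • A (JA s + q))
    (hJB : ∀ s : H, s - JB s ∈ γ • B (JB s + q))
    (x : ℕ → H)
    (hx : ∀ n, x (n + 1) = (1 - lam n) • x n +
        lam n • ((2 * β) • JB ((2 * β) • JA (x n) - x n) - ((2 * β) • JA (x n) - x n))) :
    Tendsto (fun n => x (n + 1) - x n) atTop (nhds (0 : H)) := by
  obtain ⟨hβ0, hβ1⟩ := hβ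
  set c : ℝ := γ / (2 * (1 - β)) with hc_def
  have h1β : (1:ℝ) - β ≠ 0 := by linarith
  have hc2 : (2 - 2*β) * c = γ := by
    rw [hc_def]
    field_simp
  -- extract the fixed point data
  obtain ⟨w, u, hu, hqeq⟩ := hq
  obtain ⟨v, hv, hcv⟩ := hu
  obtain ⟨a, ha, b, hb, hab⟩ := Set.mem_add.mp hv
  set p : H := w - q + γ • a with hp_def
  have hcv' : c • v = u := hcv
  have hwq : w - q = -(c • (a + b)) := by
    rw [hab, hcv', hqeq]; abel
  -- JA p = w - q
  have hJAp : JA p = w - q := by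
    refine resolvent_unique A hA.1 γ hγ q p _ _ (hJA p) ?_
    have h1 : p - (w - q) = γ • a := by rw [hp_def]; abel
    have h2 : (w - q) + q = w := by abel
    rw [h1, h2]
    exact Set.smul_mem_smul_set ha
  have hRAp : (2*β) • JA p - p = (2*β - 1) • (w - q) - γ • a := by
    rw [hJAp, hp_def]; module
  -- JB (RA p) = w - q
  have hJBp : JB ((2*β) • JA p - p) = w - q := by
    refine resolvent_unique B hB.1 γ hγ q _ _ _ (hJB _) ?_
    have key : (2*β - 2) • (w - q) = γ • (a + b) := by
      rw [hwq, smul_neg, smul_smul,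
        show (2*β - 2) * c = -γ by linear_combination -hc2]
      module
    have h1 : ((2*β) • JA p - p) - (w - q) = γ • b := by
      have h0 : ((2*β) • JA p - p) - (w - q) = (2*β - 2) • (w - q) - γ • a := by
        rw [hRAp]; module
      rw [h0, key, smul_add]; abel
    have h2 : (w - q) + q = w := by abel
    rw [h1, h2]
    exact Set.smul_mem_smul_set hb
  -- T is nonexpansive
  have gen : ∀ (J : H → H) (O : H → Set H), MonotoneOp O →
      (∀ s, s - J s ∈ γ • O (J s + q)) →
      ∀ s t, ‖((2*β) • J s - s) - ((2*β) • J t - t)‖ ≤ ‖s - t‖ := by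
    intro J O hO hJ s t
    obtain ⟨u₁, hu₁, hu₁'⟩ := hJ s
    obtain ⟨v₁, hv₁, hv₁'⟩ := hJ t
    have hu₁'' : γ • u₁ = s - J s := hu₁'
    have hv₁'' : γ • v₁ = t - J t := hv₁'
    have hm := hO (J s + q) (J t + q) u₁ v₁ hu₁ hv₁
    have hin : (J s + q) - (J t + q) = J s - J t := by abel
    rw [hin] at hm
    have hγuv : γ • (u₁ - v₁) = (s - t) - (J s - J t) := by
      rw [smul_sub, hu₁'', hv₁'']; abel
    have hfirm : 0 ≤ ⟪J s - J t, (s - t) - (J s - J t)⟫ := by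
      rw [← hγuv, real_inner_smul_right]
      exact mul_nonneg hγ.le hm
    have h2 := refl_nonexp (J s - J t) (s - t) hfirm
    have hco : ((2*β) • J s - s) - ((2*β) • J t - t) =
        (1 - β) • (-(s - t)) + β • ((2:ℝ) • (J s - J t) - (s - t)) := by module
    rw [hco]
    refine le_trans (norm_add_le _ _) ?_
    rw [norm_smul, norm_smul, norm_neg, Real.norm_eq_abs, Real.norm_eq_abs,
      abs_of_nonneg (by linarith), abs_of_nonneg hβ0.le]
    nlinarith [norm_nonneg (s - t)]
  refine km_conv (fun s => (2*β) • JB ((2*β) • JA s - s) - ((2*β) • JA s - s))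
    ?_ p ?_ lam hlam hlamsum x hx
  · intro s t
    have h1 := gen JB B hB.1 hJB ((2*β) • JA s - s) ((2*β) • JA t - t)
    have h2 := gen JA A hA.1 hJA s t
    exact le_trans h1 h2
  · show (2*β) • JB ((2*β) • JA p - p) - ((2*β) • JA p - p) = p
    rw [hJBp, hRAp, hp_def]; module
end

section
/- Let H be a real Hilbert space, let A, B : H → Set H be maximally monotone operators, let γ > 0, β ∈ (0,1), let (λ_n) be a sequence in [0,1] with ∑ λ_n(1−λ_n) = ∞, and suppose q ∈ ran(Id + (γ/(2(1−β)))(A + B)). Given x_0 ∈ H, define x_{n+1} = (1−λ_n) x_n + λ_n (2β J_{γB_{−q}} − Id)((2β J_{γA_{−q}} − Id)(x_n)). Then there exists x* ∈ H which is a fixed point of the map T = (2β J_{γB_{−q}} − Id) ∘ (2β J_{γA_{−q}} − Id) such that (x_n) converges weakly to x* (i.e. ⟨x_n, z⟩ → ⟨x*, z⟩ for every z ∈ H) and J_{γA}(q + x*) = J_{(γ/(2(1−β)))(A+B)}(q). -/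
/-!
With `R_J = 2βJ - Id`, the iteration is the Krasnosel'skii–Mann scheme for `T = R_{JB} ∘ R_{JA}`.
Resolvents of monotone operators are firmly nonexpansive, so for `β ≤ 1` each `R_J`, hence `T`,
is nonexpansive. A solution `p` of `q - p ∈ c (A p + B p)`, `c = γ / (2(1-β))`, yields a fixed
point of `T`, so the iterates are Fejér monotone with respect to `Fix T`, and `∑ λₙ(1-λₙ) = ∞`
forces `‖xₙ - T xₙ‖ → 0`. By demiclosedness every weak cluster point is fixed by `T`, and Opial's
argument makes it unique. Reading `T x* = x*` back through the resolvents shows that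
`p = JA x* + q` solves the inclusion defining `J_{c(A+B)}(q)`, and `p = J_{γA}(q + x*)`.
-/

open Pointwise RealInnerProductSpace Filter

section Resolvent

variable {H : Type*} [NormedAddCommGroup H] [InnerProductSpace ℝ H]

def FirmlyNonexpansive (J : H → H) : Prop :=
  ∀ s t : H, ‖J s - J t‖ ^ 2 ≤ ⟪J s - J t, s - t⟫

namespace MonotoneOp

variable {A : H → Set H} {γ : ℝ} {q s t u v : H}

lemma inner_sub_nonneg_of_mem_smul (hA : MonotoneOp A) (hγ : 0 ≤ γ)
    (hu : s - u ∈ γ • A (u + q)) (hv : t - v ∈ γ • A (v + q)) :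
    0 ≤ ⟪u - v, (s - u) - (t - v)⟫ := by
  obtain ⟨a, ha, hau⟩ := Set.mem_smul_set.mp hu
  obtain ⟨b, hb, hbv⟩ := Set.mem_smul_set.mp hv
  have hab := hA _ _ _ _ ha hb
  rw [add_sub_add_right_eq_sub] at hab
  rw [← hau, ← hbv, ← smul_sub, real_inner_smul_right]
  exact mul_nonneg hγ hab

lemma eq_of_mem_smul (hA : MonotoneOp A) (hγ : 0 ≤ γ)
    (hu : s - u ∈ γ • A (u + q)) (hv : s - v ∈ γ • A (v + q)) : u = v := by
  have h := hA.inner_sub_nonneg_of_mem_smul hγ hu hv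
  rw [sub_sub_sub_cancel_left, ← neg_sub u v, inner_neg_right, neg_nonneg] at h
  exact sub_eq_zero.mp (real_inner_self_nonpos.mp h)

lemma firmlyNonexpansive_resolvent (hA : MonotoneOp A) (hγ : 0 ≤ γ) {J : H → H}
    (hJ : ∀ s, s - J s ∈ γ • A (J s + q)) : FirmlyNonexpansive J := fun s t => by
  have h := hA.inner_sub_nonneg_of_mem_smul hγ (hJ s) (hJ t)
  rwa [sub_sub_sub_comm, inner_sub_right, real_inner_self_eq_norm_sq, sub_nonneg] at h

lemma resolvent_add_eq (hA : MonotoneOp A) (hγ : 0 ≤ γ) {J JA : H → H}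
    (hJ : ∀ s, s - J s ∈ γ • A (J s)) (hJA : ∀ s, s - JA s ∈ γ • A (JA s + q)) (w : H) :
    J (q + w) = JA w + q := by
  refine hA.eq_of_mem_smul (q := 0) hγ (by simpa using hJ (q + w)) ?_
  rw [add_zero, show q + w - (JA w + q) = w - JA w by abel]
  exact hJA w

end MonotoneOp

def relaxedReflection (β : ℝ) (J : H → H) (s : H) : H :=
  (2 * β) • J s - s

lemma FirmlyNonexpansive.lipschitzWith_relaxedReflection {J : H → H} (hJ : FirmlyNonexpansive J)
    {β : ℝ} (hβ0 : 0 ≤ β) (hβ1 : β ≤ 1) : LipschitzWith 1 (relaxedReflection β J) := by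
  refine lipschitzWith_iff_norm_sub_le.mpr fun s t => ?_
  have hvec : relaxedReflection β J s - relaxedReflection β J t
      = (2 * β) • (J s - J t) - (s - t) := by
    simp only [relaxedReflection]; module
  rw [NNReal.coe_one, one_mul, hvec, ← sq_le_sq₀ (norm_nonneg _) (norm_nonneg _),
    norm_sub_sq_real, norm_smul, real_inner_smul_left, mul_pow, Real.norm_eq_abs, sq_abs]
  have hfirm := hJ s t
  have hβsq : β ^ 2 ≤ β := by nlinarith
  nlinarith [mul_le_mul_of_nonneg_right hβsq (sq_nonneg ‖J s - J t‖)]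

end Resolvent

lemma norm_one_sub_smul_add_smul_sq {H : Type*} [NormedAddCommGroup H] [InnerProductSpace ℝ H]
    (c : ℝ) (a b : H) :
    ‖(1 - c) • a + c • b‖ ^ 2 = (1 - c) * ‖a‖ ^ 2 + c * ‖b‖ ^ 2 - c * (1 - c) * ‖a - b‖ ^ 2 := by
  rw [norm_add_sq_real, norm_sub_sq_real, norm_smul, norm_smul, real_inner_smul_left,
    real_inner_smul_right, mul_pow, mul_pow, Real.norm_eq_abs, Real.norm_eq_abs, sq_abs, sq_abs]
  ring

section WeakConvergence

variable {H : Type*} [NormedAddCommGroup H] [InnerProductSpace ℝ H]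

def TendstoWeakly (x : ℕ → H) (w : H) : Prop :=
  ∀ z : H, Tendsto (fun n => ⟪x n, z⟫) atTop (nhds ⟪w, z⟫)

/-- Sequential Banach–Alaoglu in the separable closed span of the sequence, then Riesz
representation. -/
theorem exists_strictMono_tendstoWeakly [CompleteSpace H] {x : ℕ → H} {C : ℝ}
    (hC : ∀ n, ‖x n‖ ≤ C) : ∃ (w : H) (φ : ℕ → ℕ), StrictMono φ ∧ TendstoWeakly (x ∘ φ) w := by
  set K := (Submodule.span ℝ (Set.range x)).topologicalClosure
  have hxK (n : ℕ) : x n ∈ K :=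
    Submodule.le_topologicalClosure _ (Submodule.subset_span ⟨n, rfl⟩)
  have : CompleteSpace K := (Submodule.isClosed_topologicalClosure _).completeSpace_coe
  have : TopologicalSpace.SeparableSpace K :=
    (Set.countable_range x).isSeparable.span.closure.separableSpace
  set y : ℕ → WeakDual ℝ K := fun n =>
    StrongDual.toWeakDual (InnerProductSpace.toDual ℝ K ⟨x n, hxK n⟩)
  have hy (n : ℕ) : y n ∈ WeakDual.toStrongDual ⁻¹' Metric.closedBall 0 C := by
    change dist (InnerProductSpace.toDual ℝ K ⟨x n, hxK n⟩) 0 ≤ C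
    rw [dist_zero_right, LinearIsometryEquiv.norm_map]
    exact hC n
  obtain ⟨f, -, φ, hφ, hf⟩ := WeakDual.isSeqCompact_closedBall ℝ K 0 C hy
  refine ⟨(InnerProductSpace.toDual ℝ K).symm (WeakDual.toStrongDual f), φ, hφ, fun z => ?_⟩
  -- `x n ∈ K`, so only the projection of `z` onto `K` is seen by `⟪x n, z⟫`
  have := ((WeakDual.eval_continuous (K.orthogonalProjectionOnto z)).tendsto f).comp hf
  convert this using 2 with k
  · simp [y]
  · rw [← Submodule.inner_orthogonalProjectionOnto_eq_of_mem_left,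
      InnerProductSpace.toDual_symm_apply]
    rfl

lemma eq_of_tendstoWeakly_of_tendsto_norm_sub {x : ℕ → H} {w₁ w₂ : H} {ℓ₁ ℓ₂ : ℝ}
    (hℓ₁ : Tendsto (fun n => ‖x n - w₁‖) atTop (nhds ℓ₁))
    (hℓ₂ : Tendsto (fun n => ‖x n - w₂‖) atTop (nhds ℓ₂))
    {φ₁ φ₂ : ℕ → ℕ} (hφ₁ : Tendsto φ₁ atTop atTop) (hφ₂ : Tendsto φ₂ atTop atTop)
    (hw₁ : TendstoWeakly (x ∘ φ₁) w₁) (hw₂ : TendstoWeakly (x ∘ φ₂) w₂) : w₁ = w₂ := by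
  have hpol (n : ℕ) : ⟪x n, w₁ - w₂⟫ =
      (‖x n - w₂‖ ^ 2 - ‖x n - w₁‖ ^ 2 - ‖w₂‖ ^ 2 + ‖w₁‖ ^ 2) / 2 := by
    rw [inner_sub_right, norm_sub_sq_real, norm_sub_sq_real]
    ring
  set M := (ℓ₂ ^ 2 - ℓ₁ ^ 2 - ‖w₂‖ ^ 2 + ‖w₁‖ ^ 2) / 2
  have hM : Tendsto (fun n => ⟪x n, w₁ - w₂⟫) atTop (nhds M) := by
    simp only [hpol]
    exact ((((hℓ₂.pow 2).sub (hℓ₁.pow 2)).sub_const _).add_const _).div_const 2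
  have h₁ : ⟪w₁, w₁ - w₂⟫ = M := tendsto_nhds_unique (hw₁ _) (hM.comp hφ₁)
  have h₂ : ⟪w₂, w₁ - w₂⟫ = M := tendsto_nhds_unique (hw₂ _) (hM.comp hφ₂)
  have h : ⟪w₁ - w₂, w₁ - w₂⟫ = 0 := by rw [inner_sub_left, h₁, h₂, sub_self]
  exact sub_eq_zero.mp (inner_self_eq_zero.mp h)

/-- Opial's lemma. -/
theorem exists_mem_tendstoWeakly_of_tendsto_norm_sub [CompleteSpace H] {x : ℕ → H} {C : ℝ}
    (hC : ∀ n, ‖x n‖ ≤ C) {F : Set H}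
    (hdist : ∀ g ∈ F, ∃ ℓ, Tendsto (fun n => ‖x n - g‖) atTop (nhds ℓ))
    (hcluster : ∀ (φ : ℕ → ℕ) (w : H), Tendsto φ atTop atTop → TendstoWeakly (x ∘ φ) w → w ∈ F) :
    ∃ w ∈ F, TendstoWeakly x w := by
  obtain ⟨w, φ, hφ, hw⟩ := exists_strictMono_tendstoWeakly hC
  have hwF := hcluster φ w hφ.tendsto_atTop hw
  refine ⟨w, hwF, fun z => tendsto_of_subseq_tendsto fun ψ hψ => ?_⟩
  obtain ⟨w', φ', hφ', hw'⟩ := exists_strictMono_tendstoWeakly (fun n => hC (ψ n))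
  have hψφ' : Tendsto (ψ ∘ φ') atTop atTop := hψ.comp hφ'.tendsto_atTop
  have hw'F := hcluster _ w' hψφ' hw'
  obtain ⟨ℓ, hℓ⟩ := hdist w hwF
  obtain ⟨ℓ', hℓ'⟩ := hdist w' hw'F
  have : w' = w := eq_of_tendstoWeakly_of_tendsto_norm_sub hℓ' hℓ hψφ' hφ.tendsto_atTop hw' hw
  exact ⟨φ', this ▸ hw' z⟩

/-- Demiclosedness of `Id - T` at `0` for nonexpansive `T`. -/
lemma LipschitzWith.isFixedPt_of_tendstoWeakly {T : H → H} (hT : LipschitzWith 1 T)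
    {y : ℕ → H} {w : H} {C : ℝ} (hC : ∀ k, ‖y k - w‖ ≤ C) (hw : TendstoWeakly y w)
    (hres : Tendsto (fun k => ‖y k - T (y k)‖) atTop (nhds 0)) : Function.IsFixedPt T w := by
  set e := fun k => ‖y k - T (y k)‖
  have hineq (k : ℕ) : ‖w - T w‖ ^ 2 ≤ e k ^ 2 + 2 * C * e k - 2 * ⟪y k - w, w - T w⟫ := by
    have hexp : ‖y k - T w‖ ^ 2 = ‖y k - w‖ ^ 2 + 2 * ⟪y k - w, w - T w⟫ + ‖w - T w‖ ^ 2 := by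
      rw [← norm_add_sq_real, sub_add_sub_cancel]
    have htri : ‖y k - T w‖ ≤ e k + ‖y k - w‖ := by
      calc ‖y k - T w‖ ≤ ‖y k - T (y k)‖ + ‖T (y k) - T w‖ :=
            norm_sub_le_norm_sub_add_norm_sub _ _ _
        _ ≤ e k + ‖y k - w‖ := add_le_add le_rfl (by simpa using hT.norm_sub_le (y k) w)
    have he : 0 ≤ e k := norm_nonneg _
    nlinarith [norm_nonneg (y k - T w), norm_nonneg (y k - w), hC k]
  have hinner : Tendsto (fun k => ⟪y k - w, w - T w⟫) atTop (nhds 0) := by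
    simpa [inner_sub_left] using (hw (w - T w)).sub_const ⟪w, w - T w⟫
  have hlim : Tendsto (fun k => e k ^ 2 + 2 * C * e k - 2 * ⟪y k - w, w - T w⟫)
      atTop (nhds 0) := by
    simpa using ((hres.pow 2).add (hres.const_mul (2 * C))).sub (hinner.const_mul 2)
  have h : ‖w - T w‖ ^ 2 ≤ 0 := le_of_tendsto_of_tendsto' tendsto_const_nhds hlim hineq
  have h0 : ‖w - T w‖ = 0 := by nlinarith [norm_nonneg (w - T w)]
  exact (sub_eq_zero.mp (norm_eq_zero.mp h0)).symm

end WeakConvergence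

namespace KrasnoselskiiMann

variable {H : Type*} [NormedAddCommGroup H] [InnerProductSpace ℝ H]
  {T : H → H} {lam : ℕ → ℝ} {x : ℕ → H}

lemma norm_sub_sq_succ_le (hT : LipschitzWith 1 T) (hlam : ∀ n, lam n ∈ Set.Icc (0 : ℝ) 1)
    (hx : ∀ n, x (n + 1) = (1 - lam n) • x n + lam n • T (x n))
    {g : H} (hg : Function.IsFixedPt T g) (n : ℕ) :
    ‖x (n + 1) - g‖ ^ 2 ≤ ‖x n - g‖ ^ 2 - lam n * (1 - lam n) * ‖x n - T (x n)‖ ^ 2 := by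
  obtain ⟨hl0, hl1⟩ := hlam n
  have hsplit : x (n + 1) - g = (1 - lam n) • (x n - g) + lam n • (T (x n) - g) := by
    rw [hx n]; module
  have hTg : ‖T (x n) - g‖ ^ 2 ≤ ‖x n - g‖ ^ 2 := by
    have := hT.norm_sub_le (x n) g
    rw [hg.eq, NNReal.coe_one, one_mul] at this
    exact pow_le_pow_left₀ (norm_nonneg _) this 2
  rw [hsplit, norm_one_sub_smul_add_smul_sq, sub_sub_sub_cancel_right]
  nlinarith [mul_le_mul_of_nonneg_left hTg hl0]

lemma antitone_norm_sub (hT : LipschitzWith 1 T) (hlam : ∀ n, lam n ∈ Set.Icc (0 : ℝ) 1)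
    (hx : ∀ n, x (n + 1) = (1 - lam n) • x n + lam n • T (x n))
    {g : H} (hg : Function.IsFixedPt T g) : Antitone (fun n => ‖x n - g‖) := by
  refine antitone_nat_of_succ_le fun n => ?_
  have hstep := norm_sub_sq_succ_le hT hlam hx hg n
  have hres : 0 ≤ lam n * (1 - lam n) * ‖x n - T (x n)‖ ^ 2 :=
    mul_nonneg (mul_nonneg (hlam n).1 (sub_nonneg.mpr (hlam n).2)) (sq_nonneg _)
  exact (sq_le_sq₀ (norm_nonneg _) (norm_nonneg _)).mp (by linarith)

lemma sum_range_mul_norm_sub_sq_le (hT : LipschitzWith 1 T)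
    (hlam : ∀ n, lam n ∈ Set.Icc (0 : ℝ) 1)
    (hx : ∀ n, x (n + 1) = (1 - lam n) • x n + lam n • T (x n))
    {g : H} (hg : Function.IsFixedPt T g) (n : ℕ) :
    ∑ i ∈ Finset.range n, lam i * (1 - lam i) * ‖x i - T (x i)‖ ^ 2 ≤ ‖x 0 - g‖ ^ 2 := by
  suffices h : ∑ i ∈ Finset.range n, lam i * (1 - lam i) * ‖x i - T (x i)‖ ^ 2
      ≤ ‖x 0 - g‖ ^ 2 - ‖x n - g‖ ^ 2 by linarith [sq_nonneg ‖x n - g‖]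
  induction n with
  | zero => simp
  | succ n ih =>
    rw [Finset.sum_range_succ]
    linarith [norm_sub_sq_succ_le hT hlam hx hg n]

lemma antitone_norm_sub_apply (hT : LipschitzWith 1 T) (hlam : ∀ n, lam n ∈ Set.Icc (0 : ℝ) 1)
    (hx : ∀ n, x (n + 1) = (1 - lam n) • x n + lam n • T (x n)) :
    Antitone (fun n => ‖x n - T (x n)‖) := by
  refine antitone_nat_of_succ_le fun n => ?_
  obtain ⟨hl0, hl1⟩ := hlam n
  have hsplit : x (n + 1) - T (x (n + 1))
      = (1 - lam n) • (x n - T (x n)) + (T (x n) - T (x (n + 1))) := by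
    rw [hx n]; module
  have hstep : x n - x (n + 1) = lam n • (x n - T (x n)) := by rw [hx n]; module
  calc ‖x (n + 1) - T (x (n + 1))‖
      ≤ ‖(1 - lam n) • (x n - T (x n))‖ + ‖T (x n) - T (x (n + 1))‖ := by
        rw [hsplit]; exact norm_add_le _ _
    _ ≤ (1 - lam n) * ‖x n - T (x n)‖ + ‖x n - x (n + 1)‖ := by
        rw [norm_smul, Real.norm_of_nonneg (sub_nonneg.mpr hl1)]
        simpa using hT.norm_sub_le (x n) (x (n + 1))
    _ = ‖x n - T (x n)‖ := by
        rw [hstep, norm_smul, Real.norm_of_nonneg hl0]; ring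

lemma tendsto_norm_sub_apply (hT : LipschitzWith 1 T) (hlam : ∀ n, lam n ∈ Set.Icc (0 : ℝ) 1)
    (hlamsum : ¬ Summable (fun n => lam n * (1 - lam n)))
    (hx : ∀ n, x (n + 1) = (1 - lam n) • x n + lam n • T (x n))
    {g : H} (hg : Function.IsFixedPt T g) :
    Tendsto (fun n => ‖x n - T (x n)‖) atTop (nhds 0) := by
  have hanti := antitone_norm_sub_apply hT hlam hx
  have hbdd : BddBelow (Set.range fun n => ‖x n - T (x n)‖) :=
    ⟨0, by rintro _ ⟨n, rfl⟩; exact norm_nonneg _⟩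
  have hlim := tendsto_atTop_ciInf hanti hbdd
  set L := ⨅ n, ‖x n - T (x n)‖
  suffices hL : L = 0 by rwa [hL] at hlim
  by_contra hL
  have hLpos : 0 < L := lt_of_le_of_ne (le_ciInf fun n => norm_nonneg _) (Ne.symm hL)
  have hnn (n : ℕ) : 0 ≤ lam n * (1 - lam n) :=
    mul_nonneg (hlam n).1 (sub_nonneg.mpr (hlam n).2)
  have hsummable : Summable fun n => lam n * (1 - lam n) * ‖x n - T (x n)‖ ^ 2 :=
    summable_of_sum_range_le (fun n => mul_nonneg (hnn n) (sq_nonneg _))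
      (sum_range_mul_norm_sub_sq_le hT hlam hx hg)
  -- the residuals stay above `L > 0`, so the weights would be summable
  refine hlamsum (Summable.of_nonneg_of_le hnn (fun n => ?_) (hsummable.div_const (L ^ 2)))
  have hLn : L ^ 2 ≤ ‖x n - T (x n)‖ ^ 2 :=
    pow_le_pow_left₀ hLpos.le (ciInf_le hbdd n) 2
  rw [le_div_iff₀ (by positivity)]
  exact mul_le_mul_of_nonneg_left hLn (hnn n)

theorem exists_isFixedPt_tendstoWeakly [CompleteSpace H] (hT : LipschitzWith 1 T)
    (hfix : ∃ g, Function.IsFixedPt T g) (hlam : ∀ n, lam n ∈ Set.Icc (0 : ℝ) 1)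
    (hlamsum : ¬ Summable (fun n => lam n * (1 - lam n)))
    (hx : ∀ n, x (n + 1) = (1 - lam n) • x n + lam n • T (x n)) :
    ∃ w, Function.IsFixedPt T w ∧ TendstoWeakly x w := by
  obtain ⟨g, hg⟩ := hfix
  have hbound (n : ℕ) : ‖x n‖ ≤ ‖x 0 - g‖ + ‖g‖ :=
    (norm_le_norm_sub_add (x n) g).trans
      (by linarith [antitone_norm_sub hT hlam hx hg (Nat.zero_le n)])
  refine exists_mem_tendstoWeakly_of_tendsto_norm_sub hbound
    (fun g hg => ⟨_, tendsto_atTop_ciInf (antitone_norm_sub hT hlam hx hg)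
      ⟨0, by rintro _ ⟨n, rfl⟩; exact norm_nonneg _⟩⟩) fun φ w hφ hw => ?_
  refine hT.isFixedPt_of_tendstoWeakly (C := ‖x 0 - g‖ + ‖g‖ + ‖w‖)
    (fun k => (norm_sub_le _ _).trans (add_le_add_left (hbound (φ k)) _)) hw
    ((tendsto_norm_sub_apply hT hlam hlamsum hx hg).comp hφ)

end KrasnoselskiiMann

namespace DouglasRachford

variable {H : Type*} [NormedAddCommGroup H] [InnerProductSpace ℝ H]
  {A B : H → Set H} {γ β : ℝ} {q : H} {JA JB : H → H}

lemma exists_isFixedPt_of_mem_ranIdAdd (hA : MonotoneOp A) (hB : MonotoneOp B) (hγ : 0 ≤ γ)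
    (hβ : β ≠ 1) (hJA : ∀ s, s - JA s ∈ γ • A (JA s + q))
    (hJB : ∀ s, s - JB s ∈ γ • B (JB s + q))
    (hq : q ∈ ranIdAdd (fun x => (γ / (2 * (1 - β))) • (A x + B x))) :
    ∃ f, Function.IsFixedPt (relaxedReflection β JB ∘ relaxedReflection β JA) f := by
  obtain ⟨p, _, ⟨_, ⟨a, ha, b, hb, rfl⟩, rfl⟩, hqp⟩ := hq
  have hu : (2 * β - 2) • (p - q) = γ • (a + b) := by
    have hc : (2 - 2 * β) * (γ / (2 * (1 - β))) = γ := by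
      field_simp [sub_ne_zero.mpr hβ.symm]
    rw [← hc, ← smul_smul, hqp]
    module
  set u := p - q
  -- the fixed point is `u + γ a`: both resolvents evaluated along `T` return `u`
  have hJAf : JA (u + γ • a) = u := by
    refine hA.eq_of_mem_smul hγ (hJA _) ?_
    rw [add_sub_cancel_left, sub_add_cancel]
    exact Set.smul_mem_smul_set ha
  have hJBr : JB ((2 * β) • u - (u + γ • a)) = u := by
    refine hB.eq_of_mem_smul hγ (hJB _) ?_
    rw [show (2 * β) • u - (u + γ • a) - u = (2 * β - 2) • u - γ • a by module, hu, smul_add,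
      add_sub_cancel_left, sub_add_cancel]
    exact Set.smul_mem_smul_set hb
  refine ⟨u + γ • a, ?_⟩
  simp only [Function.IsFixedPt, Function.comp_apply, relaxedReflection, hJAf, hJBr]
  exact sub_sub_cancel _ _

lemma mem_smul_add_of_isFixedPt (hβ0 : β ≠ 0) (hβ1 : β ≠ 1)
    (hJA : ∀ s, s - JA s ∈ γ • A (JA s + q)) (hJB : ∀ s, s - JB s ∈ γ • B (JB s + q)) {w : H}
    (hw : Function.IsFixedPt (relaxedReflection β JB ∘ relaxedReflection β JA) w) :
    q - (JA w + q) ∈ (γ / (2 * (1 - β))) • (A (JA w + q) + B (JA w + q)) := by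
  set u := JA w
  set r := relaxedReflection β JA w
  have hJBr : JB r = u := by
    refine smul_right_injective H (mul_ne_zero two_ne_zero hβ0) ?_
    have := sub_eq_iff_eq_add.mp hw
    simp only [r, relaxedReflection] at this ⊢
    rw [this]; abel
  obtain ⟨a, ha, hau⟩ := Set.mem_smul_set.mp (hJA w)
  obtain ⟨b, hb, hbu⟩ := Set.mem_smul_set.mp (hJBr ▸ hJB r)
  have hab : γ • (a + b) = (2 * β - 2) • u := by
    rw [smul_add, hau, hbu]
    simp only [r, relaxedReflection]
    module
  have hsum : (γ / (2 * (1 - β))) • (a + b) = q - (u + q) := by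
    have hc : 1 / (2 * (1 - β)) * (2 * β - 2) = -1 := by
      field_simp [sub_ne_zero.mpr hβ1.symm]; ring
    calc (γ / (2 * (1 - β))) • (a + b) = (1 / (2 * (1 - β))) • γ • (a + b) := by
          rw [smul_smul, one_div_mul_eq_div]
      _ = q - (u + q) := by rw [hab, smul_smul, hc, neg_one_smul]; abel
  rw [← hsum]
  exact Set.smul_mem_smul_set (Set.add_mem_add ha hb)

end DouglasRachford

theorem stmt11 {H : Type*} [NormedAddCommGroup H] [InnerProductSpace ℝ H] [CompleteSpace H]
    (A B : H → Set H) (hA : MaxMonotoneOp A) (hB : MaxMonotoneOp B)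
    (γ β : ℝ) (hγ : 0 < γ) (hβ : β ∈ Set.Ioo (0 : ℝ) 1)
    (lam : ℕ → ℝ) (hlam : ∀ n, lam n ∈ Set.Icc (0 : ℝ) 1)
    (hlamsum : ¬ Summable (fun n => lam n * (1 - lam n)))
    (q : H) (hq : q ∈ ranIdAdd (fun x => (γ / (2 * (1 - β))) • (A x + B x)))
    -- `JA = J_{γA₋q}` and `JB = J_{γB₋q}`: the (single-valued) resolvents of the
    -- inner (−q)-perturbations of `γA` and `γB`; `JγA = J_{γA}`.
    (JA JB JγA : H → H)
    (hJA : ∀ s : H, s - JA s ∈ γ • A (JA s + q))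
    (hJB : ∀ s : H, s - JB s ∈ γ • B (JB s + q))
    (hJγA : ∀ s : H, s - JγA s ∈ γ • A (JγA s))
    (x : ℕ → H)
    (hx : ∀ n, x (n + 1) = (1 - lam n) • x n +
        lam n • ((2 * β) • JB ((2 * β) • JA (x n) - x n) - ((2 * β) • JA (x n) - x n))) :
    ∃ xs p : H,
      -- `xs` is a fixed point of `(2βJ_{γB₋q} − Id) ∘ (2βJ_{γA₋q} − Id)`
      ((2 * β) • JB ((2 * β) • JA xs - xs) - ((2 * β) • JA xs - xs) = xs) ∧
      -- `(x n)` converges weakly to `xs`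
      (∀ z : H, Tendsto (fun n => ⟪x n, z⟫) atTop (nhds ⟪xs, z⟫)) ∧
      -- `p = J_{(γ/(2(1−β)))(A+B)}(q)`
      q - p ∈ (γ / (2 * (1 - β))) • (A p + B p) ∧
      JγA (q + xs) = p := by
  obtain ⟨hβ0, hβ1⟩ := hβ
  have hRA := (hA.1.firmlyNonexpansive_resolvent hγ.le hJA).lipschitzWith_relaxedReflection
    hβ0.le hβ1.le
  have hRB := (hB.1.firmlyNonexpansive_resolvent hγ.le hJB).lipschitzWith_relaxedReflection
    hβ0.le hβ1.le
  obtain ⟨xs, hxs, hweak⟩ := KrasnoselskiiMann.exists_isFixedPt_tendstoWeakly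
    (by simpa using hRB.comp hRA)
    (DouglasRachford.exists_isFixedPt_of_mem_ranIdAdd hA.1 hB.1 hγ.le hβ1.ne hJA hJB hq)
    hlam hlamsum hx
  exact ⟨xs, JA xs + q, hxs, hweak,
    DouglasRachford.mem_smul_add_of_isFixedPt hβ0.ne' hβ1.ne hJA hJB hxs,
    hA.1.resolvent_add_eq hγ.le hJγA hJA xs⟩
end

section
/- Let H be a real Hilbert space, let A, B : H → Set H be maximally monotone operators, let γ > 0, β ∈ (0,1), let (λ_n) be a sequence in [0,1] with ∑ λ_n(1−λ_n) = ∞, and suppose q ∈ ran(Id + (γ/(2(1−β)))(A + B)). Given x_0 ∈ H, define x_{n+1} = (1−λ_n) x_n + λ_n (2β J_{γB_{−q}} − Id)((2β J_{γA_{−q}} − Id)(x_n)). Then the shadow sequence (J_{γA}(q + x_n)) converges strongly (in norm) to J_{(γ/(2(1−β)))(A+B)}(q). -/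
open Pointwise RealInnerProductSpace Filter

section aux
variable {H : Type*} [NormedAddCommGroup H] [InnerProductSpace ℝ H]

lemma sq_le_imp {a b : ℝ} (hb : 0 ≤ b) (h : a^2 ≤ b^2) (ha : 0 ≤ a) : a ≤ b := by
  nlinarith

lemma mono_shift {A : H → Set H} (hA : MonotoneOp A) (q : H) :
    MonotoneOp (fun y => A (y + q)) := by
  intro x y u v hu hv
  have := hA (x + q) (y + q) u v hu hv
  simpa using this

lemma res_unique {C : H → Set H} (hC : MonotoneOp C) {γ : ℝ} (hγ : 0 < γ)
    {s y₁ y₂ : H} (h1 : s - y₁ ∈ γ • C y₁) (h2 : s - y₂ ∈ γ • C y₂) : y₁ = y₂ := by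
  obtain ⟨u1, hu1, hu1e⟩ := h1
  obtain ⟨u2, hu2, hu2e⟩ := h2
  have hmono := hC y₁ y₂ u1 u2 hu1 hu2
  have h3 : γ • (u1 - u2) = y₂ - y₁ := by
    simp only [smul_sub]
    rw [show γ • u1 = s - y₁ from hu1e, show γ • u2 = s - y₂ from hu2e]; abel
  have h4 : u1 - u2 = γ⁻¹ • (y₂ - y₁) := by
    rw [← h3, smul_smul, inv_mul_cancel₀ hγ.ne', one_smul]
  rw [h4, real_inner_smul_right] at hmono
  have h5 : ⟪y₁ - y₂, y₂ - y₁⟫ = -(‖y₁ - y₂‖^2) := by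
    rw [show y₂ - y₁ = -(y₁ - y₂) by abel, inner_neg_right, real_inner_self_eq_norm_sq]
  rw [h5] at hmono
  have hγi : 0 < γ⁻¹ := inv_pos.mpr hγ
  have h7 : ‖y₁ - y₂‖^2 ≤ 0 := by nlinarith
  have h6 : y₁ - y₂ = 0 := by
    have hn : ‖y₁ - y₂‖ = 0 := by nlinarith [norm_nonneg (y₁ - y₂)]
    simpa using hn
  exact sub_eq_zero.mp h6

lemma res_firm {C : H → Set H} (hC : MonotoneOp C) {γ : ℝ} (hγ : 0 < γ)
    {J : H → H} (hJ : ∀ s, s - J s ∈ γ • C (J s)) (s t : H) :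
    ‖J s - J t‖^2 ≤ ⟪J s - J t, s - t⟫ := by
  obtain ⟨u, hu, hue⟩ := hJ s
  obtain ⟨v, hv, hve⟩ := hJ t
  have hmono := hC (J s) (J t) u v hu hv
  have h3 : γ • (u - v) = (s - t) - (J s - J t) := by
    simp only [smul_sub]
    rw [show γ • u = s - J s from hue, show γ • v = t - J t from hve]; abel
  have h4 : u - v = γ⁻¹ • ((s - t) - (J s - J t)) := by
    rw [← h3, smul_smul, inv_mul_cancel₀ hγ.ne', one_smul]
  rw [h4, real_inner_smul_right, inner_sub_right, real_inner_self_eq_norm_sq] at hmono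
  have hγi : 0 < γ⁻¹ := inv_pos.mpr hγ
  nlinarith

lemma key_ineq {β : ℝ} (hβ0 : 0 ≤ β) (e d : H) (h : ‖e‖^2 ≤ ⟪e, d⟫) :
    ‖(2*β) • e - d‖^2 ≤ ‖d‖^2 - 4*β*(1-β)*‖e‖^2 := by
  have expand : ‖(2*β) • e - d‖^2
      = (2*β)^2*‖e‖^2 - 2*((2*β)*⟪e,d⟫) + ‖d‖^2 := by
    rw [← real_inner_self_eq_norm_sq]
    simp only [inner_sub_left, inner_sub_right, real_inner_smul_left,
      real_inner_smul_right, real_inner_self_eq_norm_sq]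
    rw [real_inner_comm d e]
    have hns : ‖(2*β) • e‖ = |2*β| * ‖e‖ := by rw [norm_smul, Real.norm_eq_abs]
    rw [hns, abs_of_nonneg (by linarith : (0:ℝ) ≤ 2*β)]
    ring
  nlinarith

lemma km_id (l : ℝ) (a b : H) :
    ‖(1-l) • a + l • b‖^2 = (1-l)*‖a‖^2 + l*‖b‖^2 - l*(1-l)*‖a-b‖^2 := by
  rw [← real_inner_self_eq_norm_sq, ← real_inner_self_eq_norm_sq,
    ← real_inner_self_eq_norm_sq, ← real_inner_self_eq_norm_sq]
  simp only [inner_add_left, inner_add_right, inner_sub_left, inner_sub_right,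
    real_inner_smul_left, real_inner_smul_right]
  rw [real_inner_comm b a]
  ring

lemma comp_bound {L s t : ℝ} (hL : 0 < L) (hs : 0 ≤ s) (hLr : L ≤ t) :
    s ≤ (L^2)⁻¹ * (s * t^2) := by
  have hL2 : (0:ℝ) < L^2 := by positivity
  have h0 : L^2 ≤ t^2 := by nlinarith
  have h1 : s * L^2 ≤ s * t^2 := mul_le_mul_of_nonneg_left h0 hs
  calc s = (L^2)⁻¹ * (s * L^2) := by field_simp
    _ ≤ (L^2)⁻¹ * (s * t^2) := mul_le_mul_of_nonneg_left h1 (le_of_lt (inv_pos.mpr hL2))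

end aux

set_option maxHeartbeats 1000000 in
theorem stmt12 {H : Type*} [NormedAddCommGroup H] [InnerProductSpace ℝ H] [CompleteSpace H]
    (A B : H → Set H) (hA : MaxMonotoneOp A) (hB : MaxMonotoneOp B)
    (γ β : ℝ) (hγ : 0 < γ) (hβ : β ∈ Set.Ioo (0 : ℝ) 1)
    (lam : ℕ → ℝ) (hlam : ∀ n, lam n ∈ Set.Icc (0 : ℝ) 1)
    (hlamsum : ¬ Summable (fun n => lam n * (1 - lam n)))
    (q : H) (hq : q ∈ ranIdAdd (fun x => (γ / (2 * (1 - β))) • (A x + B x)))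
    -- `JA = J_{γA₋q}` and `JB = J_{γB₋q}`: the (single-valued) resolvents of the
    -- inner (−q)-perturbations of `γA` and `γB`; `JγA = J_{γA}`.
    (JA JB JγA : H → H)
    (hJA : ∀ s : H, s - JA s ∈ γ • A (JA s + q))
    (hJB : ∀ s : H, s - JB s ∈ γ • B (JB s + q))
    (hJγA : ∀ s : H, s - JγA s ∈ γ • A (JγA s))
    (x : ℕ → H)
    (hx : ∀ n, x (n + 1) = (1 - lam n) • x n +
        lam n • ((2 * β) • JB ((2 * β) • JA (x n) - x n) - ((2 * β) • JA (x n) - x n))) :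
    -- the shadow sequence `J_{γA}(q + x n)` converges strongly to `J_{(γ/(2(1−β)))(A+B)}(q)`
    ∃ p : H, q - p ∈ (γ / (2 * (1 - β))) • (A p + B p) ∧
      Tendsto (fun n => JγA (q + x n)) atTop (nhds p) := by
  obtain ⟨hβ0, hβ1⟩ := hβ
  have h1β : (0:ℝ) < 1 - β := by linarith
  obtain ⟨p, u, hu, hqe⟩ := hq
  have hmem : q - p ∈ (γ / (2 * (1 - β))) • (A p + B p) := by
    rw [hqe]; simpa using hu
  obtain ⟨wab, hwab, hwe⟩ := hu
  obtain ⟨a, ha, b, hb, habe⟩ := hwab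
  refine ⟨p, hmem, ?_⟩
  set c : ℝ := γ / (2 * (1 - β)) with hc
  have hqp : q - p = c • (a + b) := by
    rw [hqe, add_sub_cancel_left, ← hwe, ← habe]
  have hγab : γ • (a + b) = (2*(1-β)) • (q - p) := by
    rw [hqp, smul_smul, hc]
    congr 1
    field_simp
  set w : H := p - q with hw
  set z : H := w + γ • a with hz
  have hwq : w + q = p := by rw [hw]; abel
  -- JA z = w
  have hJAz : JA z = w := by
    refine res_unique (mono_shift hA.1 q) hγ (hJA z) ?_
    have hzw : z - w = γ • a := by rw [hz]; abel
    rw [hzw]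
    show γ • a ∈ γ • A (w + q)
    rw [hwq]
    exact Set.smul_mem_smul_set ha
  -- JB ((2β)•w - z) = w
  set saz : H := (2*β) • w - z with hsazd
  have hsaz : saz - w = γ • b := by
    have h' : saz - w = (2*(1-β)) • (q - p) - γ • a := by
      rw [hsazd, hz, hw]
      module
    rw [h', ← hγab, smul_add]
    abel
  have hJBsaz : JB saz = w := by
    refine res_unique (mono_shift hB.1 q) hγ (hJB saz) ?_
    rw [hsaz]
    show γ • b ∈ γ • B (w + q)
    rw [hwq]
    exact Set.smul_mem_smul_set hb
  set T : H → H := fun s => (2*β) • JB ((2*β) • JA s - s) - ((2*β) • JA s - s) with hT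
  have hTz : T z = z := by
    rw [hT]
    show (2*β) • JB ((2*β) • JA z - z) - ((2*β) • JA z - z) = z
    rw [hJAz, ← hsazd, hJBsaz, hsazd]
    abel
  have fnA : ∀ s t : H, ‖JA s - JA t‖^2 ≤ ⟪JA s - JA t, s - t⟫ :=
    res_firm (mono_shift hA.1 q) hγ hJA
  have fnB : ∀ s t : H, ‖JB s - JB t‖^2 ≤ ⟪JB s - JB t, s - t⟫ :=
    res_firm (mono_shift hB.1 q) hγ hJB
  -- main decrease estimate for T
  have hTdec : ∀ s t : H, ‖T s - T t‖^2 ≤ ‖s - t‖^2 - 4*β*(1-β)*‖JA s - JA t‖^2 := by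
    intro s t
    have step1 := key_ineq (le_of_lt hβ0) (JA s - JA t) (s - t) (fnA s t)
    have heq1 : (2*β) • (JA s - JA t) - (s - t)
        = ((2*β) • JA s - s) - ((2*β) • JA t - t) := by module
    rw [heq1] at step1
    set ms : H := (2*β) • JA s - s
    set mt : H := (2*β) • JA t - t
    have step2 := key_ineq (le_of_lt hβ0) (JB ms - JB mt) (ms - mt) (fnB ms mt)
    have heq2 : (2*β) • (JB ms - JB mt) - (ms - mt) = T s - T t := by
      rw [hT]; module
    rw [heq2] at step2
    have hnn : 0 ≤ 4*β*(1-β)*‖JB ms - JB mt‖^2 := by positivity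
    linarith
  have hTne : ∀ s t : H, ‖T s - T t‖ ≤ ‖s - t‖ := by
    intro s t
    have h := hTdec s t
    have hnn : 0 ≤ 4*β*(1-β)*‖JA s - JA t‖^2 := by positivity
    exact sq_le_imp (norm_nonneg _) (by linarith) (norm_nonneg _)
  have hxT : ∀ n, x (n + 1) = (1 - lam n) • x n + lam n • T (x n) := hx
  have hxsub : ∀ n, x (n + 1) - z = (1 - lam n) • (x n - z) + lam n • (T (x n) - z) := by
    intro n
    rw [hxT n]
    module
  set r : ℕ → ℝ := fun n => ‖T (x n) - x n‖ with hr
  set ρ : ℕ → ℝ := fun n => ‖x n - z‖ with hρ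
  have hrnn : ∀ n, 0 ≤ r n := fun n => norm_nonneg _
  have hlam0 : ∀ n, 0 ≤ lam n := fun n => (hlam n).1
  have hlam1 : ∀ n, lam n ≤ 1 := fun n => (hlam n).2
  have hlamnn : ∀ n, 0 ≤ lam n * (1 - lam n) := fun n =>
    mul_nonneg (hlam0 n) (by linarith [hlam1 n])
  -- KM decrease
  have hkm : ∀ n, ρ (n+1)^2 ≤ ρ n^2 - lam n * (1 - lam n) * r n^2 := by
    intro n
    have hid := km_id (lam n) (x n - z) (T (x n) - z)
    have h1 : x (n+1) - z = (1 - lam n) • (x n - z) + lam n • (T (x n) - z) := hxsub n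
    have h2 : (x n - z) - (T (x n) - z) = -(T (x n) - x n) := by abel
    rw [h2, norm_neg] at hid
    have hTle : ‖T (x n) - z‖ ≤ ρ n := by
      have := hTne (x n) z
      rwa [hTz] at this
    have hTle2 : ‖T (x n) - z‖^2 ≤ ρ n^2 := by
      nlinarith [norm_nonneg (T (x n) - z), hTle]
    have : ρ (n+1)^2 = (1 - lam n)*ρ n^2 + lam n*‖T (x n) - z‖^2
        - lam n*(1 - lam n)*r n^2 := by
      rw [hρ]
      simp only []
      rw [h1, hid]
    nlinarith [hlam0 n, hlam1 n]
  have hρmono : ∀ n, ρ (n+1) ≤ ρ n := by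
    intro n
    have h := hkm n
    have := hlamnn n
    have hrn := hrnn n
    refine sq_le_imp (norm_nonneg _) ?_ (norm_nonneg _)
    linarith [mul_nonneg this (sq_nonneg (r n))]
  have hρ0 : ∀ n, ρ n ≤ ρ 0 := by
    intro n
    induction n with
    | zero => exact le_refl _
    | succ k ih => exact le_trans (hρmono k) ih
  -- r is antitone
  have hrmono : ∀ n, r (n+1) ≤ r n := by
    intro n
    have hxd : x (n+1) - x n = lam n • (T (x n) - x n) := by
      rw [hxT n]; module
    have hTd : T (x n) - x (n+1) = (1 - lam n) • (T (x n) - x n) := by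
      rw [hxT n]; module
    have h1 : ‖x (n+1) - x n‖ = lam n * r n := by
      rw [hxd, norm_smul, Real.norm_eq_abs, abs_of_nonneg (hlam0 n)]
    have h2 : ‖T (x n) - x (n+1)‖ = (1 - lam n) * r n := by
      rw [hTd, norm_smul, Real.norm_eq_abs, abs_of_nonneg (by linarith [hlam1 n])]
    calc r (n+1) = ‖(T (x (n+1)) - T (x n)) + (T (x n) - x (n+1))‖ := by
          rw [hr]; simp only []; congr 1; abel
      _ ≤ ‖T (x (n+1)) - T (x n)‖ + ‖T (x n) - x (n+1)‖ := norm_add_le _ _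
      _ ≤ ‖x (n+1) - x n‖ + ‖T (x n) - x (n+1)‖ := by
          linarith [hTne (x (n+1)) (x n)]
      _ = lam n * r n + (1 - lam n) * r n := by rw [h1, h2]
      _ = r n := by ring
  have hrant : Antitone r := antitone_nat_of_succ_le hrmono
  -- partial sums bounded
  have hpsum : ∀ n, ∑ k ∈ Finset.range n, lam k * (1 - lam k) * r k^2 ≤ ρ 0^2 - ρ n^2 := by
    intro n
    induction n with
    | zero => simp
    | succ k ih =>
        rw [Finset.sum_range_succ]
        have := hkm k
        linarith
  have hsummable : Summable (fun n => lam n * (1 - lam n) * r n^2) := by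
    refine summable_of_sum_range_le (c := ρ 0^2)
      (fun n => mul_nonneg (hlamnn n) (sq_nonneg _)) (fun n => ?_)
    linarith [hpsum n, sq_nonneg (ρ n)]
  -- r tends to 0
  have hrbdd : BddBelow (Set.range r) := ⟨0, fun y hy => by
    obtain ⟨n, rfl⟩ := hy; exact hrnn n⟩
  have hrtend : Tendsto r atTop (nhds (⨅ n, r n)) := tendsto_atTop_ciInf hrant hrbdd
  have hL0 : (0:ℝ) ≤ ⨅ n, r n := le_ciInf hrnn
  have hLeq : (⨅ n, r n) = 0 := by
    by_contra hne
    have hLpos : 0 < ⨅ n, r n := lt_of_le_of_ne hL0 (Ne.symm hne)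
    apply hlamsum
    have hmul : Summable (fun n => ((⨅ n, r n)^2)⁻¹ * (lam n * (1 - lam n) * r n^2)) :=
      hsummable.mul_left _
    refine Summable.of_nonneg_of_le hlamnn ?_ hmul
    intro n
    have hrge : (⨅ n, r n) ≤ r n := ciInf_le hrbdd n
    exact comp_bound hLpos (hlamnn n) hrge
  rw [hLeq] at hrtend
  -- shadow estimate
  have hshadow : ∀ n, 4*β*(1-β)*‖JA (x n) - w‖^2 ≤ 2 * ρ 0 * r n := by
    intro n
    have hk := hTdec (x n) z
    rw [hTz, hJAz] at hk
    have h1 : ‖x n - z‖ - ‖T (x n) - z‖ ≤ r n := by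
      have h := norm_sub_norm_le (x n - z) (T (x n) - z)
      have heq : (x n - z) - (T (x n) - z) = -(T (x n) - x n) := by abel
      rw [heq, norm_neg] at h
      exact h
    have h2 : ‖T (x n) - z‖ ≤ ‖x n - z‖ := by
      have h := hTne (x n) z
      rwa [hTz] at h
    have h3 : ‖x n - z‖ ≤ ρ 0 := hρ0 n
    have h5 : ‖x n - z‖ + ‖T (x n) - z‖ ≤ 2 * ρ 0 := by linarith
    have h4 : (‖x n - z‖ - ‖T (x n) - z‖) * (‖x n - z‖ + ‖T (x n) - z‖)
        ≤ r n * (2 * ρ 0) := by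
      refine mul_le_mul h1 h5 ?_ (hrnn n)
      positivity
    nlinarith [hk, h4]
  have hc4 : (0:ℝ) < 4*β*(1-β) := by nlinarith
  have hJAtend : Tendsto (fun n => ‖JA (x n) - w‖^2) atTop (nhds 0) := by
    have hbnd : ∀ n, ‖JA (x n) - w‖^2 ≤ (4*β*(1-β))⁻¹ * (2 * ρ 0 * r n) := by
      intro n
      have hs := hshadow n
      calc ‖JA (x n) - w‖^2
          = (4*β*(1-β))⁻¹ * (4*β*(1-β)*‖JA (x n) - w‖^2) := by
            field_simp
        _ ≤ (4*β*(1-β))⁻¹ * (2 * ρ 0 * r n) :=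
            mul_le_mul_of_nonneg_left hs (le_of_lt (inv_pos.mpr hc4))
    have hlim : Tendsto (fun n => (4*β*(1-β))⁻¹ * (2 * ρ 0 * r n)) atTop
        (nhds ((4*β*(1-β))⁻¹ * (2 * ρ 0 * 0))) :=
      ((hrtend.const_mul (2 * ρ 0)).const_mul ((4*β*(1-β))⁻¹))
    rw [mul_zero, mul_zero] at hlim
    exact squeeze_zero (fun n => sq_nonneg _) hbnd hlim
  have hJAn : Tendsto (fun n => ‖JA (x n) - w‖) atTop (nhds 0) := by
    have h2 : Tendsto (fun n => Real.sqrt (‖JA (x n) - w‖^2)) atTop (nhds (Real.sqrt 0)) :=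
      (Real.continuous_sqrt.tendsto 0).comp hJAtend
    have heq : (fun n => Real.sqrt (‖JA (x n) - w‖^2)) = fun n => ‖JA (x n) - w‖ :=
      funext fun n => Real.sqrt_sq (norm_nonneg _)
    rw [heq, Real.sqrt_zero] at h2
    exact h2
  have hJAw : Tendsto (fun n => JA (x n)) atTop (nhds w) := by
    rw [tendsto_iff_norm_sub_tendsto_zero]
    exact hJAn
  have hshid : ∀ s : H, JγA (q + s) = JA s + q := by
    intro s
    refine res_unique hA.1 hγ (hJγA (q + s)) ?_
    have heq : (q + s) - (JA s + q) = s - JA s := by abel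
    rw [heq]
    exact hJA s
  have h1 : Tendsto (fun n => JA (x n) + q) atTop (nhds (w + q)) := hJAw.add_const q
  rw [hwq] at h1
  have heqf : (fun n => JγA (q + x n)) = fun n => JA (x n) + q :=
    funext fun n => hshid (x n)
  rw [heqf]
  exact h1
end

section
/- Let H be a real Hilbert space and let A, B ⊆ H be nonempty closed convex sets with A ∩ B ≠ ∅. Let (λ_n) be a sequence in [0,1] with ∑ λ_n(1−λ_n) = ∞, let β ∈ (0,1), let q ∈ H satisfy q − P_{A∩B}(q) ∈ N_A(P_{A∩B}(q)) + N_B(P_{A∩B}(q)), and given x_0 ∈ H define x_{n+1} = (1−λ_n) x_n + λ_n (2β P_{B−q} − Id)((2β P_{A−q} − Id)(x_n)). Then (x_n) converges weakly to a point x* ∈ H (i.e. ⟨x_n, z⟩ → ⟨x*, z⟩ for all z ∈ H) which is a fixed point of (2β P_{B−q} − Id) ∘ (2β P_{A−q} − Id) and satisfies P_A(q + x*) = P_{A∩B}(q). -/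
open Pointwise RealInnerProductSpace Filter

set_option maxHeartbeats 1000000

/-- The normal cone to a set `C` at `x`:
`N_C(x) = {u | ⟪u, c − x⟫ ≤ 0 for all c ∈ C}` if `x ∈ C`, and `∅` otherwise. -/
def normalCone {H : Type*} [NormedAddCommGroup H] [InnerProductSpace ℝ H]
    (C : Set H) (x : H) : Set H :=
  {u | x ∈ C ∧ ∀ c ∈ C, ⟪u, c - x⟫ ≤ 0}

/-- `P` is the metric projector onto `C`: `P x` is a point of `C` nearest to `x`. -/
def IsProjOn {H : Type*} [NormedAddCommGroup H] [InnerProductSpace ℝ H]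
    (C : Set H) (P : H → H) : Prop :=
  ∀ x : H, P x ∈ C ∧ ∀ c ∈ C, ‖x - P x‖ ≤ ‖x - c‖

section Aux

open Topology

variable {H : Type*} [NormedAddCommGroup H] [InnerProductSpace ℝ H]

/-- variational inequality for a projector onto a convex set -/
lemma proj_vi {C : Set H} (hC : Convex ℝ C) {P : H → H} (hP : IsProjOn C P) (x : H) :
    ∀ c ∈ C, ⟪x - P x, c - P x⟫ ≤ 0 := by
  haveI : Nonempty C := ⟨⟨P x, (hP x).1⟩⟩
  have h := (norm_eq_iInf_iff_real_inner_le_zero hC (hP x).1 (u := x)).mp ?_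
  · exact h
  · refine le_antisymm ?_ ?_
    · exact le_ciInf fun w => (hP x).2 w w.2
    · exact ciInf_le ⟨0, fun _ ⟨_, h⟩ => h ▸ norm_nonneg _⟩ (⟨P x, (hP x).1⟩ : C)

/-- uniqueness: a point of `C` minimizing the distance equals `P x` -/
lemma proj_unique {C : Set H} (hC : Convex ℝ C) {P : H → H} (hP : IsProjOn C P) {x p : H}
    (hp : p ∈ C) (hmin : ∀ c ∈ C, ‖x - p‖ ≤ ‖x - c‖) : P x = p := by
  have h1 : ⟪x - P x, p - P x⟫ ≤ 0 := proj_vi hC hP x p hp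
  have h2 : ‖x - p‖ ≤ ‖x - P x‖ := hmin _ (hP x).1
  have e : ‖x - p‖ ^ 2 = ‖x - P x‖ ^ 2 - 2 * ⟪x - P x, p - P x⟫ + ‖p - P x‖ ^ 2 := by
    have : x - p = (x - P x) - (p - P x) := by abel
    rw [this, norm_sub_sq_real]
  have : ‖p - P x‖ = 0 := by
    nlinarith [norm_nonneg (x - p), norm_nonneg (x - P x), norm_nonneg (p - P x)]
  have := norm_eq_zero.mp this
  have : p = P x := by linear_combination (norm := abel1) this
  exact this.symm

/-- characterization via normal-cone condition -/
lemma proj_eq_of_normal {C : Set H} (hC : Convex ℝ C) {P : H → H} (hP : IsProjOn C P) {x p : H}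
    (hp : p ∈ C) (hvi : ∀ c ∈ C, ⟪x - p, c - p⟫ ≤ 0) : P x = p := by
  refine proj_unique hC hP hp fun c hc => ?_
  have h := hvi c hc
  have e : ‖x - c‖ ^ 2 = ‖x - p‖ ^ 2 - 2 * ⟪x - p, c - p⟫ + ‖c - p‖ ^ 2 := by
    have : x - c = (x - p) - (c - p) := by abel
    rw [this, norm_sub_sq_real]
  nlinarith [norm_nonneg (x - c), norm_nonneg (x - p), norm_nonneg (c - p)]

/-- firm nonexpansiveness of the projector -/
lemma proj_firm {C : Set H} (hC : Convex ℝ C) {P : H → H} (hP : IsProjOn C P) (x y : H) :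
    ‖P x - P y‖ ^ 2 ≤ ⟪x - y, P x - P y⟫ := by
  have h1 : ⟪x - P x, P y - P x⟫ ≤ 0 := proj_vi hC hP x _ (hP y).1
  have h2 : ⟪y - P y, P x - P y⟫ ≤ 0 := proj_vi hC hP y _ (hP x).1
  have e : ⟪x - y, P x - P y⟫
      = ‖P x - P y‖ ^ 2 - ⟪x - P x, P y - P x⟫ - ⟪y - P y, P x - P y⟫ := by
    rw [show ‖P x - P y‖ ^ 2 = ⟪P x - P y, P x - P y⟫ from (real_inner_self_eq_norm_sq _).symm]
    simp only [inner_sub_left, inner_sub_right]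
    ring
  linarith

/-- decrease property of the relaxed reflection `2βP − Id` -/
lemma reflect_ineq {C : Set H} (hC : Convex ℝ C) {P : H → H} (hP : IsProjOn C P)
    {β : ℝ} (hβ : 0 < β) (x y : H) :
    ‖((2*β) • P x - x) - ((2*β) • P y - y)‖ ^ 2
      ≤ ‖x - y‖ ^ 2 - 4*β*(1-β) * ‖P x - P y‖ ^ 2 := by
  have hfirm := proj_firm hC hP x y
  rw [real_inner_comm] at hfirm
  have e : ((2*β) • P x - x) - ((2*β) • P y - y) = (2*β) • (P x - P y) - (x - y) := by module
  rw [e, norm_sub_sq_real, norm_smul, real_inner_smul_left, Real.norm_eq_abs,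
    abs_of_pos (by positivity)]
  nlinarith [norm_nonneg (P x - P y), mul_nonneg hβ.le (sub_nonneg.2 hfirm)]

/-- Krasnoselskii–Mann convex-combination identity -/
lemma km_identity_s13 (a b y : H) {l : ℝ} (h0 : 0 ≤ l) (h1 : l ≤ 1) :
    ‖(1-l) • a + l • b - y‖ ^ 2
      = (1-l) * ‖a - y‖ ^ 2 + l * ‖b - y‖ ^ 2 - l * (1-l) * ‖a - b‖ ^ 2 := by
  have e : (1-l) • a + l • b - y = (1-l) • (a - y) + l • (b - y) := by module
  have e2 : a - b = (a - y) - (b - y) := by abel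
  have E1 : ‖(1-l) • (a - y) + l • (b - y)‖ ^ 2
      = (1-l)^2 * ‖a - y‖^2 + 2*((1-l)*l) * ⟪a - y, b - y⟫ + l^2 * ‖b - y‖^2 := by
    rw [norm_add_sq_real, norm_smul, norm_smul, real_inner_smul_left, real_inner_smul_right,
      Real.norm_eq_abs, Real.norm_eq_abs, abs_of_nonneg h0, abs_of_nonneg (by linarith)]
    ring
  have E2 : ‖a - b‖ ^ 2 = ‖a - y‖^2 - 2*⟪a - y, b - y⟫ + ‖b - y‖^2 := by
    rw [e2, norm_sub_sq_real]
  rw [e, E1, E2]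
  ring

/-- along any ultrafilter, a bounded sequence in Hilbert space has a weak limit -/
lemma weak_ultra_limit [CompleteSpace H] (x : ℕ → H) (M : ℝ) (hb : ∀ n, ‖x n‖ ≤ M)
    (U : Ultrafilter ℕ) :
    ∃ xs : H, ∀ z : H, Tendsto (fun n => ⟪x n, z⟫) U (𝓝 ⟪xs, z⟫) := by
  have key : ∀ z : H, ∃ c : ℝ, Tendsto (fun n => ⟪x n, z⟫) U (𝓝 c) := by
    intro z
    have hcpt : IsCompact (Set.Icc (-(M*‖z‖)) (M*‖z‖)) := isCompact_Icc
    have hmem : ∀ n, ⟪x n, z⟫ ∈ Set.Icc (-(M*‖z‖)) (M*‖z‖) := by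
      intro n
      have h := abs_real_inner_le_norm (x n) z
      have h2 : ‖x n‖ * ‖z‖ ≤ M * ‖z‖ := mul_le_mul_of_nonneg_right (hb n) (norm_nonneg z)
      constructor
      · linarith [neg_abs_le ⟪x n, z⟫]
      · linarith [le_abs_self ⟪x n, z⟫]
    obtain ⟨c, _, hc⟩ := hcpt.ultrafilter_le_nhds (U.map fun n => ⟪x n, z⟫)
      (by
        rw [le_principal_iff, Ultrafilter.mem_coe, Ultrafilter.mem_map]
        exact Filter.univ_mem' hmem)
    exact ⟨c, by rw [Tendsto, ← Ultrafilter.coe_map]; exact hc⟩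
  choose φ hφ using key
  have hadd : ∀ z1 z2, φ (z1 + z2) = φ z1 + φ z2 := by
    intro z1 z2
    refine tendsto_nhds_unique ?_ ((hφ z1).add (hφ z2))
    have : (fun n => ⟪x n, z1⟫ + ⟪x n, z2⟫) = fun n => ⟪x n, z1 + z2⟫ := by
      funext n; rw [inner_add_right]
    rw [this]; exact hφ _
  have hsmul : ∀ (r : ℝ) z, φ (r • z) = r * φ z := by
    intro r z
    refine tendsto_nhds_unique ?_ ((hφ z).const_mul r)
    have : (fun n => r * ⟪x n, z⟫) = fun n => ⟪x n, r • z⟫ := by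
      funext n; rw [real_inner_smul_right]
    rw [this]; exact hφ _
  have hbound : ∀ z, ‖φ z‖ ≤ M * ‖z‖ := by
    intro z
    rw [Real.norm_eq_abs]
    refine le_of_tendsto ((hφ z).abs) (Eventually.of_forall fun n => ?_)
    calc |⟪x n, z⟫| ≤ ‖x n‖ * ‖z‖ := abs_real_inner_le_norm _ _
      _ ≤ M * ‖z‖ := mul_le_mul_of_nonneg_right (hb n) (norm_nonneg z)
  let Φ : H →L[ℝ] ℝ := LinearMap.mkContinuous
    { toFun := φ, map_add' := hadd, map_smul' := hsmul } M hbound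
  refine ⟨(InnerProductSpace.toDual ℝ H).symm Φ, fun z => ?_⟩
  rw [InnerProductSpace.toDual_symm_apply]
  exact hφ z

/-- the relaxed two-reflection operator -/
def kmT (β : ℝ) (PAq PBq : H → H) : H → H :=
  fun w => (2*β) • PBq ((2*β) • PAq w - w) - ((2*β) • PAq w - w)

end Aux

theorem stmt13 {H : Type*} [NormedAddCommGroup H] [InnerProductSpace ℝ H] [CompleteSpace H]
    (A B : Set H) (hAne : A.Nonempty) (hBne : B.Nonempty)
    (hAcl : IsClosed A) (hBcl : IsClosed B)
    (hAcv : Convex ℝ A) (hBcv : Convex ℝ B)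
    (hABne : (A ∩ B).Nonempty)
    (lam : ℕ → ℝ) (hlam : ∀ n, lam n ∈ Set.Icc (0 : ℝ) 1)
    (hlamsum : ¬ Summable (fun n => lam n * (1 - lam n)))
    (β : ℝ) (hβ : β ∈ Set.Ioo (0 : ℝ) 1) (q : H)
    -- the projectors onto `A`, `A ∩ B`, `A − q` and `B − q`
    (PA PAB PAq PBq : H → H)
    (hPA : IsProjOn A PA) (hPAB : IsProjOn (A ∩ B) PAB)
    (hPAq : IsProjOn ((fun a => a - q) '' A) PAq)
    (hPBq : IsProjOn ((fun b => b - q) '' B) PBq)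
    -- the constraint qualification `q − P_{A∩B}(q) ∈ N_A(P_{A∩B}(q)) + N_B(P_{A∩B}(q))`
    (hq : q - PAB q ∈ normalCone A (PAB q) + normalCone B (PAB q))
    (x : ℕ → H)
    (hx : ∀ n, x (n + 1) = (1 - lam n) • x n +
        lam n • ((2 * β) • PBq ((2 * β) • PAq (x n) - x n) - ((2 * β) • PAq (x n) - x n))) :
    ∃ xs : H,
      -- `(x n)` converges weakly to `xs`
      (∀ z : H, Tendsto (fun n => ⟪x n, z⟫) atTop (nhds ⟪xs, z⟫)) ∧
      -- `xs` is a fixed point of `(2βP_{B−q} − Id) ∘ (2βP_{A−q} − Id)`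
      ((2 * β) • PBq ((2 * β) • PAq xs - xs) - ((2 * β) • PAq xs - xs) = xs) ∧
      PA (q + xs) = PAB q := by
  obtain ⟨hβ0, hβ1⟩ := hβ
  -- convexity of the translated sets
  have hAcv' : Convex ℝ ((fun a => a - q) '' A) := by
    rw [show (fun a : H => a - q) = (fun a : H => -q + a) from funext fun a => sub_eq_neg_add a q]
    exact hAcv.translate (-q)
  have hBcv' : Convex ℝ ((fun b : H => b - q) '' B) := by
    rw [show (fun b : H => b - q) = (fun b : H => -q + b) from funext fun b => sub_eq_neg_add b q]
    exact hBcv.translate (-q)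
  -- the operator
  set T : H → H := kmT β PAq PBq with hT_def
  have hx' : ∀ n, x (n + 1) = (1 - lam n) • x n + lam n • T (x n) := hx
  -- key decrease inequality
  have hTdec : ∀ w y, ‖T w - T y‖^2 ≤ ‖w - y‖^2
      - 4*β*(1-β) * (‖PAq w - PAq y‖^2
        + ‖PBq ((2*β) • PAq w - w) - PBq ((2*β) • PAq y - y)‖^2) := by
    intro w y
    have h1 := reflect_ineq hAcv' hPAq hβ0 w y
    have h2 := reflect_ineq hBcv' hPBq hβ0 ((2*β) • PAq w - w) ((2*β) • PAq y - y)
    have hTe : T w - T y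
        = ((2*β) • PBq ((2*β) • PAq w - w) - ((2*β) • PAq w - w))
          - ((2*β) • PBq ((2*β) • PAq y - y) - ((2*β) • PAq y - y)) := rfl
    rw [hTe]
    linarith
  have h4βpos : 0 < 4*β*(1-β) := by nlinarith
  have hTne : ∀ w y, ‖T w - T y‖ ≤ ‖w - y‖ := by
    intro w y
    have h := hTdec w y
    nlinarith [norm_nonneg (T w - T y), norm_nonneg (w - y),
      mul_nonneg h4βpos.le (add_nonneg (sq_nonneg (‖PAq w - PAq y‖))
        (sq_nonneg (‖PBq ((2*β) • PAq w - w) - PBq ((2*β) • PAq y - y)‖)))]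
  -- the explicit fixed point from the constraint qualification
  rw [Set.mem_add] at hq
  obtain ⟨u, hu, w0, hw0, huw⟩ := hq
  set p := PAB q with hp_def
  have hpA : p ∈ A := (hPAB q).1.1
  have hpB : p ∈ B := (hPAB q).1.2
  set v : H := (p - q) + (2 - 2*β) • u with hv_def
  have h2β : (0:ℝ) ≤ 2 - 2*β := by linarith
  have hPAqv : PAq v = p - q := by
    refine proj_eq_of_normal hAcv' hPAq ⟨p, hpA, rfl⟩ ?_
    rintro c ⟨a, ha, rfl⟩
    have e1 : v - (p - q) = (2 - 2*β) • u := by rw [hv_def]; abel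
    have e2 : (a - q) - (p - q) = a - p := by abel
    rw [e1, e2, real_inner_smul_left]
    exact mul_nonpos_of_nonneg_of_nonpos h2β (hu.2 a ha)
  have hw0eq : w0 = (q - p) - u := by rw [← huw]; abel
  have hPBqSv : PBq ((2*β) • PAq v - v) = p - q := by
    refine proj_eq_of_normal hBcv' hPBq ⟨p, hpB, rfl⟩ ?_
    rintro c ⟨b, hb, rfl⟩
    have e1 : ((2*β) • PAq v - v) - (p - q) = (2 - 2*β) • w0 := by
      rw [hPAqv, hv_def, hw0eq]; module
    have e2 : (b - q) - (p - q) = b - p := by abel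
    rw [e1, e2, real_inner_smul_left]
    exact mul_nonpos_of_nonneg_of_nonpos h2β (hw0.2 b hb)
  have hTv : T v = v := by
    show (2*β) • PBq ((2*β) • PAq v - v) - ((2*β) • PAq v - v) = v
    rw [hPBqSv, hPAqv, hv_def]; module
  -- every fixed point projects (in the shifted world) onto `p - q`
  have hfix_PAq : ∀ xs, T xs = xs → PAq xs = p - q := by
    intro xs hfix
    have h := hTdec xs v
    rw [hfix, hTv] at h
    have hE : ‖PAq xs - PAq v‖^2 ≤ 0 := by
      nlinarith [sq_nonneg (‖PBq ((2*β) • PAq xs - xs) - PBq ((2*β) • PAq v - v)‖),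
        mul_pos h4βpos (mul_pos h4βpos h4βpos)]
    have : ‖PAq xs - PAq v‖ = 0 := by nlinarith [norm_nonneg (PAq xs - PAq v)]
    have h0 := norm_eq_zero.mp this
    have : PAq xs = PAq v := by linear_combination (norm := abel1) h0
    rw [this, hPAqv]
  have hfix_PA : ∀ xs, T xs = xs → PA (q + xs) = PAB q := by
    intro xs hfix
    have hPAqxs := hfix_PAq xs hfix
    refine proj_unique hAcv hPA hpA fun a ha => ?_
    have h1 := (hPAq xs).2 (a - q) ⟨a, ha, rfl⟩
    rw [hPAqxs] at h1
    calc ‖q + xs - p‖ = ‖xs - (p - q)‖ := by rw [show q + xs - p = xs - (p - q) from by abel]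
      _ ≤ ‖xs - (a - q)‖ := h1
      _ = ‖q + xs - a‖ := by rw [show xs - (a - q) = q + xs - a from by abel]
  -- residuals
  set d : ℕ → ℝ := fun n => ‖x n - T (x n)‖ with hd_def
  have hd0 : ∀ n, 0 ≤ d n := fun n => norm_nonneg _
  -- Fejér inequality
  have hfejer : ∀ y, T y = y →
      ∀ n, ‖x (n+1) - y‖^2 ≤ ‖x n - y‖^2 - lam n * (1 - lam n) * d n ^ 2 := by
    intro y hy n
    obtain ⟨hl0, hl1⟩ := hlam n
    rw [hx' n, km_identity_s13 _ _ _ hl0 hl1]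
    have hTle : ‖T (x n) - y‖^2 ≤ ‖x n - y‖^2 := by
      have h := hTne (x n) y
      rw [hy] at h
      exact pow_le_pow_left₀ (norm_nonneg _) h 2
    have := mul_le_mul_of_nonneg_left hTle hl0
    simp only [hd_def]
    linarith
  have hanti : ∀ y, T y = y → Antitone (fun n => ‖x n - y‖^2) := by
    intro y hy
    refine antitone_nat_of_succ_le fun n => ?_
    obtain ⟨hl0, hl1⟩ := hlam n
    have := hfejer y hy n
    nlinarith [sq_nonneg (d n), mul_nonneg hl0 (sub_nonneg.2 hl1)]
  -- boundedness
  have hxv : ∀ n, ‖x n - v‖ ≤ ‖x 0 - v‖ := by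
    intro n
    have h := hanti v hTv (Nat.zero_le n)
    simp only at h
    nlinarith [norm_nonneg (x n - v), norm_nonneg (x 0 - v)]
  set M : ℝ := ‖x 0 - v‖ + ‖v‖ with hM_def
  have hbM : ∀ n, ‖x n‖ ≤ M := by
    intro n
    calc ‖x n‖ = ‖(x n - v) + v‖ := by rw [sub_add_cancel]
      _ ≤ ‖x n - v‖ + ‖v‖ := norm_add_le _ _
      _ ≤ M := by rw [hM_def]; linarith [hxv n]
  -- the residual is antitone
  have hdanti : Antitone d := by
    refine antitone_nat_of_succ_le fun n => ?_
    obtain ⟨hl0, hl1⟩ := hlam n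
    have e1 : x (n+1) - T (x n) = (1 - lam n) • (x n - T (x n)) := by rw [hx' n]; module
    have e2 : x n - x (n+1) = lam n • (x n - T (x n)) := by rw [hx' n]; module
    have h1 : ‖x (n+1) - T (x n)‖ = (1 - lam n) * d n := by
      rw [e1, norm_smul, Real.norm_eq_abs, abs_of_nonneg (by linarith)]
    have h2 : ‖T (x n) - T (x (n+1))‖ ≤ lam n * d n := by
      calc ‖T (x n) - T (x (n+1))‖ ≤ ‖x n - x (n+1)‖ := hTne _ _
        _ = lam n * d n := by rw [e2, norm_smul, Real.norm_eq_abs, abs_of_nonneg hl0]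
    calc d (n+1) = ‖(x (n+1) - T (x n)) + (T (x n) - T (x (n+1)))‖ := by
          rw [show (x (n+1) - T (x n)) + (T (x n) - T (x (n+1))) = x (n+1) - T (x (n+1)) from
            by abel]
      _ ≤ ‖x (n+1) - T (x n)‖ + ‖T (x n) - T (x (n+1))‖ := norm_add_le _ _
      _ ≤ (1 - lam n) * d n + lam n * d n := by rw [h1]; linarith
      _ = d n := by ring
  have hdbdd : BddBelow (Set.range d) := ⟨0, by rintro _ ⟨n, rfl⟩; exact hd0 n⟩
  have hdc : Tendsto d atTop (nhds (⨅ n, d n)) := tendsto_atTop_ciInf hdanti hdbdd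
  have hcnn : 0 ≤ ⨅ n, d n := le_ciInf hd0
  -- summability argument : the infimum of the residuals is zero
  have hczero : (⨅ n, d n) = 0 := by
    by_contra hne
    have hcpos : 0 < ⨅ n, d n := hcnn.lt_of_ne (Ne.symm hne)
    have hge : ∀ n, (⨅ n, d n) ≤ d n := fun n => ciInf_le hdbdd n
    have hsum : ∀ n, ‖x n - v‖^2
        + (∑ i ∈ Finset.range n, lam i * (1 - lam i) * d i ^ 2) ≤ ‖x 0 - v‖^2 := by
      intro n
      induction n with
      | zero => simp
      | succ k ih =>
        rw [Finset.sum_range_succ]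
        have := hfejer v hTv k
        linarith
    have hsum2 : ∀ n, (∑ i ∈ Finset.range n, lam i * (1 - lam i)) * (⨅ n, d n)^2
        ≤ ‖x 0 - v‖^2 := by
      intro n
      have h1 : ∑ i ∈ Finset.range n, lam i * (1 - lam i) * (⨅ n, d n)^2
          ≤ ∑ i ∈ Finset.range n, lam i * (1 - lam i) * d i ^ 2 := by
        refine Finset.sum_le_sum fun i _ => ?_
        obtain ⟨hl0, hl1⟩ := hlam i
        have : (⨅ n, d n)^2 ≤ d i ^ 2 := pow_le_pow_left₀ hcnn (hge i) 2
        exact mul_le_mul_of_nonneg_left this (by nlinarith)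
      rw [← Finset.sum_mul] at h1
      nlinarith [hsum n, sq_nonneg (‖x n - v‖)]
    refine hlamsum (summable_of_sum_range_le (c := ‖x 0 - v‖^2 / (⨅ n, d n)^2)
      (fun n => ?_) (fun n => ?_))
    · obtain ⟨hl0, hl1⟩ := hlam n
      nlinarith
    · rw [le_div_iff₀ (by positivity)]
      exact hsum2 n
  have hdlim : Tendsto d atTop (nhds 0) := hczero ▸ hdc
  -- the ultrafilter weak-limit machinery
  have main : ∀ (U : Ultrafilter ℕ), (U : Filter ℕ) ≤ atTop →
      ∃ xs, T xs = xs ∧ ∀ z, Tendsto (fun n => ⟪x n, z⟫) U (nhds ⟪xs, z⟫) := by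
    intro U hU
    obtain ⟨xs, hxs⟩ := weak_ultra_limit x M hbM U
    refine ⟨xs, ?_, hxs⟩
    set w := xs - T xs with hw_def
    have hC : ∀ n, ‖x n - xs‖ ≤ M + ‖xs‖ := fun n =>
      (norm_sub_le _ _).trans (by linarith [hbM n])
    have key : ∀ n, ‖w‖^2 ≤ d n * d n + 2*(M + ‖xs‖)*d n - 2*(⟪x n, w⟫ - ⟪xs, w⟫) := by
      intro n
      have h1 : ‖x n - T xs‖ ≤ d n + ‖x n - xs‖ := by
        calc ‖x n - T xs‖ = ‖(x n - T (x n)) + (T (x n) - T xs)‖ := by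
              rw [show (x n - T (x n)) + (T (x n) - T xs) = x n - T xs from by abel]
          _ ≤ ‖x n - T (x n)‖ + ‖T (x n) - T xs‖ := norm_add_le _ _
          _ ≤ d n + ‖x n - xs‖ := add_le_add le_rfl (hTne _ _)
      have h2 : ‖x n - T xs‖^2 = ‖x n - xs‖^2 + 2*⟪x n - xs, w⟫ + ‖w‖^2 := by
        rw [show x n - T xs = (x n - xs) + w from by rw [hw_def]; abel, norm_add_sq_real]
      have h3 : ‖x n - T xs‖^2 ≤ (d n + ‖x n - xs‖)^2 :=
        pow_le_pow_left₀ (norm_nonneg _) h1 2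
      have h4 : ⟪x n - xs, w⟫ = ⟪x n, w⟫ - ⟪xs, w⟫ := inner_sub_left _ _ _
      nlinarith [hC n, hd0 n, norm_nonneg (x n - xs)]
    have hdU : Tendsto d (U : Filter ℕ) (nhds 0) := hdlim.mono_left hU
    have hinw : Tendsto (fun n => ⟪x n, w⟫ - ⟪xs, w⟫) (U : Filter ℕ) (nhds 0) := by
      have := (hxs w).sub (tendsto_const_nhds (x := ⟪xs, w⟫) (f := (U : Filter ℕ)))
      simpa using this
    have hg : Tendsto (fun n => d n * d n + 2*(M + ‖xs‖)*d n - 2*(⟪x n, w⟫ - ⟪xs, w⟫))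
        (U : Filter ℕ) (nhds 0) := by
      have := ((hdU.mul hdU).add (hdU.const_mul (2*(M + ‖xs‖)))).sub (hinw.const_mul 2)
      simpa [mul_comm] using this
    have hw2 : ‖w‖^2 ≤ 0 := ge_of_tendsto hg (Eventually.of_forall key)
    have : ‖w‖ = 0 := by nlinarith [norm_nonneg w]
    have hw0' : w = 0 := norm_eq_zero.mp this
    have hsub : xs - T xs = 0 := by rw [← hw_def]; exact hw0'
    exact (sub_eq_zero.mp hsub).symm
  -- conclude
  haveI : (atTop : Filter ℕ).NeBot := atTop_neBot
  set U0 : Ultrafilter ℕ := Ultrafilter.of atTop with hU0_def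
  have hU0 : (U0 : Filter ℕ) ≤ atTop := Ultrafilter.of_le _
  obtain ⟨xs0, hfix0, hlim0⟩ := main U0 hU0
  refine ⟨xs0, ?_, hfix0, hfix_PA xs0 hfix0⟩
  intro z
  rw [tendsto_iff_ultrafilter]
  intro V hV
  obtain ⟨xsV, hfixV, hlimV⟩ := main V hV
  have hxseq : xsV = xs0 := by
    set w := xs0 - xsV with hw_def
    obtain ⟨L0, hL0⟩ : ∃ L, Tendsto (fun n => ‖x n - xs0‖^2) atTop (nhds L) :=
      ⟨_, tendsto_atTop_ciInf (hanti xs0 hfix0) ⟨0, by rintro _ ⟨n, rfl⟩; positivity⟩⟩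
    obtain ⟨LV, hLV⟩ : ∃ L, Tendsto (fun n => ‖x n - xsV‖^2) atTop (nhds L) :=
      ⟨_, tendsto_atTop_ciInf (hanti xsV hfixV) ⟨0, by rintro _ ⟨n, rfl⟩; positivity⟩⟩
    have hform : ∀ n, ⟪x n, w⟫
        = (‖x n - xsV‖^2 - ‖x n - xs0‖^2 - ‖xsV‖^2 + ‖xs0‖^2)/2 := by
      intro n
      have e0 := norm_sub_sq_real (x n) xs0
      have eV := norm_sub_sq_real (x n) xsV
      have ew : ⟪x n, w⟫ = ⟪x n, xs0⟫ - ⟪x n, xsV⟫ := by rw [hw_def, inner_sub_right]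
      linarith
    have htend : Tendsto (fun n => ⟪x n, w⟫) atTop
        (nhds ((LV - L0 - ‖xsV‖^2 + ‖xs0‖^2)/2)) := by
      have h := (((hLV.sub hL0).sub_const (‖xsV‖^2)).add_const (‖xs0‖^2)).div_const 2
      exact h.congr (fun n => (hform n).symm)
    have e1 : ⟪xs0, w⟫ = (LV - L0 - ‖xsV‖^2 + ‖xs0‖^2)/2 :=
      tendsto_nhds_unique (hlim0 w) (htend.mono_left hU0)
    have e2 : ⟪xsV, w⟫ = (LV - L0 - ‖xsV‖^2 + ‖xs0‖^2)/2 :=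
      tendsto_nhds_unique (hlimV w) (htend.mono_left hV)
    have hww : ⟪w, w⟫ = 0 := by
      rw [hw_def, inner_sub_left]
      rw [← hw_def, e1, e2]
      ring
    have : w = 0 := inner_self_eq_zero.mp hww
    rw [hw_def] at this
    have : xs0 = xsV := by linear_combination (norm := abel1) this
    exact this.symm
  rw [← hxseq]
  exact hlimV z
end

section
/- Let H be a real Hilbert space, let r ≥ 1 and let A_i : H → Set H (i = 1,…,r) be set-valued operators. In the product Hilbert space 𝐇 = H^r, let 𝐁(x_1,…,x_r) = A_1(x_1) × ⋯ × A_r(x_r), let 𝐃 = {(x,…,x) | x ∈ H} be the diagonal with canonical embedding j(x) = (x,…,x), and let N_𝐃 be the normal cone operator of 𝐃. Then for every x ∈ H, J_{𝐁 + N_𝐃}(j(x)) = {j(p) | p ∈ J_{(1/r)∑_{i=1}^r A_i}(x)}, where the sum of operators is taken pointwise with Minkowski sums. -/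
/-!
Writing `𝐰 = 𝐛 + 𝐧` with `𝐛 ∈ 𝐁 𝐲` and `𝐧 ∈ N_𝐃 𝐲` and summing the coordinates kills `𝐧`:
`j(x) - 𝐲 ∈ (𝐁 + N_𝐃) 𝐲` holds exactly when `𝐲 = j(p)` and some selection `𝐛` of
`A₁ p × ⋯ × A_r p` has `∑ᵢ bᵢ = r (x - p)`, i.e. `x - p ∈ (1/r) ∑ᵢ Aᵢ p`.
-/

open Pointwise Finset

/-- The product operator `𝐁(x₁,…,x_r) = A₁(x₁) × ⋯ × A_r(x_r)` on `H^r`. -/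
def prodOp {H : Type*} [NormedAddCommGroup H] [InnerProductSpace ℝ H] {r : ℕ}
    (A : Fin r → H → Set H) (x : Fin r → H) : Set (Fin r → H) :=
  {u | ∀ i, u i ∈ A i (x i)}

/-- The normal cone operator of the diagonal `𝐃 = {(x,…,x) | x ∈ H}` in `H^r`:
`N_𝐃(𝐱) = {𝐮 | ∑ᵢ uᵢ = 0}` if `𝐱 ∈ 𝐃`, and `∅` otherwise. -/
def diagNormalCone {H : Type*} [NormedAddCommGroup H] [InnerProductSpace ℝ H] {r : ℕ}
    (x : Fin r → H) : Set (Fin r → H) :=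
  {u | (∃ z : H, ∀ i, x i = z) ∧ ∑ i, u i = 0}

section

variable {H : Type*} [NormedAddCommGroup H] [InnerProductSpace ℝ H] {r : ℕ}

theorem mem_add_diagNormalCone_iff {S : Set (Fin r → H)} {w y : Fin r → H} :
    w ∈ S + diagNormalCone y ↔ (∃ z, ∀ i, y i = z) ∧ ∃ b ∈ S, ∑ i, b i = ∑ i, w i := by
  constructor
  · rintro ⟨b, hb, n, ⟨hy, hn⟩, rfl⟩
    exact ⟨hy, b, hb, by simp [sum_add_distrib, hn]⟩
  · rintro ⟨hy, b, hb, hsum⟩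
    exact ⟨b, hb, w - b, ⟨hy, by simp [sum_sub_distrib, hsum]⟩, add_sub_cancel b w⟩

theorem mem_sum_iff_exists_mem_prodOp {A : Fin r → H → Set H} {y : Fin r → H} {a : H} :
    a ∈ ∑ i, A i (y i) ↔ ∃ b ∈ prodOp A y, ∑ i, b i = a := by
  simp only [Set.mem_fintype_sum, exists_prop, prodOp, Set.mem_ofPred_eq]

theorem const_sub_const_mem_prodOp_add_diagNormalCone_iff (hr : r ≠ 0)
    {A : Fin r → H → Set H} {x p : H} :
    (fun _ => x) - (fun _ => p) ∈ prodOp A (fun _ => p) + diagNormalCone (fun _ => p) ↔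
      x - p ∈ (r : ℝ)⁻¹ • ∑ i, A i p := by
  have hsum : ∑ _i : Fin r, (x - p) = (r : ℝ) • (x - p) := by
    simp [← Nat.cast_smul_eq_nsmul ℝ, smul_sub]
  rw [mem_add_diagNormalCone_iff, Set.mem_inv_smul_set_iff₀ (Nat.cast_ne_zero.2 hr),
    mem_sum_iff_exists_mem_prodOp (y := fun _ => p)]
  simp only [Pi.sub_apply, hsum]
  exact and_iff_right ⟨p, fun _ => rfl⟩

theorem eq_const_of_mem_add_diagNormalCone {S : Set (Fin r → H)} {w y : Fin r → H}
    (h : w ∈ S + diagNormalCone y) : ∃ p, y = fun _ => p := by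
  obtain ⟨⟨p, hp⟩, -⟩ := mem_add_diagNormalCone_iff.1 h
  exact ⟨p, funext hp⟩

end

theorem stmt15_general {H : Type*} [NormedAddCommGroup H] [InnerProductSpace ℝ H]
    (r : ℕ) (hr : 1 ≤ r) (A : Fin r → H → Set H) (x : H) :
    -- `J_{𝐁 + N_𝐃}(j(x)) = {j(p) | p ∈ J_{(1/r)∑ᵢ Aᵢ}(x)}`
    {y : Fin r → H | (fun _ => x) - y ∈ prodOp A y + diagNormalCone y}
      = (fun p : H => fun _ : Fin r => p) ''
          {p : H | x - p ∈ ((r : ℝ)⁻¹) • ∑ i, A i p} := by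
  have hr0 : r ≠ 0 := Nat.one_le_iff_ne_zero.1 hr
  ext y
  constructor
  · intro hy
    obtain ⟨p, rfl⟩ := eq_const_of_mem_add_diagNormalCone hy
    exact ⟨p, (const_sub_const_mem_prodOp_add_diagNormalCone_iff hr0).1 hy, rfl⟩
  · rintro ⟨p, hp, rfl⟩
    exact (const_sub_const_mem_prodOp_add_diagNormalCone_iff hr0).2 hp

theorem stmt15 {H : Type*} [NormedAddCommGroup H] [InnerProductSpace ℝ H] [CompleteSpace H]
    (r : ℕ) (hr : 1 ≤ r) (A : Fin r → H → Set H) (x : H) :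
    -- `J_{𝐁 + N_𝐃}(j(x)) = {j(p) | p ∈ J_{(1/r)∑ᵢ Aᵢ}(x)}`
    {y : Fin r → H | (fun _ => x) - y ∈ prodOp A y + diagNormalCone y}
      = (fun p : H => fun _ : Fin r => p) ''
          {p : H | x - p ∈ ((r : ℝ)⁻¹) • ∑ i, A i p} :=
  stmt15_general r hr A x
end
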